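/- arXiv:1811.09272 — 5 statements merged into one kernel-verified Lean document; each statement's English description precedes it below -/
import Mathlib

section
/- Let K be a field and let A be a connected graded K-algebra generated in degree 1 such that A_n = 0 for all n ≥ 3, dim_K A_1 is finite and at least 2, dim_K A_2 = 1, and the multiplication pairing A_1 × A_1 → A_2 is nondegenerate (for every nonzero x ∈ A_1 there exist y, y' ∈ A_1 with x·y ≠ 0 and y'·x ≠ 0; this is the case for the mod-p cohomology algebra of an infinite Demushkin pro-p group). Then for every left ideal I of A generated in degree 1 with I ≠ A_+ and every x ∈ A_1 \ I, the colon ideal I : x is generated in degree 1. In particular A is universally Koszul. -/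
/-!
Since `I` is generated in degree one it is homogeneous, hence so is `J = I : x`, and it suffices
to show that every homogeneous element of `J` lies in the ideal generated by `J ∩ A₁`.
In degree `0` there is nothing to do because `x ∉ I`, and `A_n = 0` for `n ≥ 3`.
In degree `2`: right multiplication by `x` maps `A₁` to the line `A₂`, so as `dim A₁ ≥ 2` it
kills some `u ≠ 0`; then `u ∈ J ∩ A₁`, and by nondegeneracy some `y * u` spans `A₂`.
-/

/-- The colon ideal `I : x = {a | a * x ∈ I}` of a left ideal `I` by an element `x`. -/
def colonIdeal {A : Type*} [Ring A] (I : Ideal A) (x : A) : Ideal A :=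
  Submodule.comap (LinearMap.toSpanSingleton A A x) I

/-- A left ideal is generated in degree 1, i.e. generated by a subset of the
degree-one component `D`. -/
def GenInDeg1 {A : Type*} [Ring A] (D : Set A) (I : Ideal A) : Prop :=
  ∃ S ⊆ D, I = Ideal.span S

/-- The augmentation ideal `A_+ = ⊕_{n ≥ 1} A_n` of a connected graded algebra. -/
def augIdeal {K A : Type*} [Field K] [Ring A] [Algebra K A]
    (𝒜 : ℕ → Submodule K A) : Ideal A :=
  Ideal.span (⋃ n : ℕ, ((𝒜 (n + 1) : Submodule K A) : Set A))

open DirectSum Module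

theorem mem_colonIdeal {A : Type*} [Ring A] {I : Ideal A} {x a : A} :
    a ∈ colonIdeal I x ↔ a * x ∈ I :=
  Iff.rfl

theorem Ideal.IsHomogeneous.colon {ι σ A : Type*} [Ring A] [SetLike σ A]
    [AddSubmonoidClass σ A] (𝒜 : ι → σ) [DecidableEq ι] [AddRightCancelMonoid ι]
    [GradedRing 𝒜] {I : Ideal A} (hI : I.IsHomogeneous 𝒜) {i : ι} {x : A} (hx : x ∈ 𝒜 i) :
    (colonIdeal I x).IsHomogeneous 𝒜 := by
  intro j a ha
  have := hI (j + i) (mem_colonIdeal.1 ha)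
  rwa [decompose_mul, decompose_of_mem 𝒜 hx, coe_mul_of_apply_add] at this

theorem Ideal.IsHomogeneous.le_of_forall_homogeneous_mem {ι σ A : Type*} [Semiring A]
    [SetLike σ A] [AddSubmonoidClass σ A] {𝒜 : ι → σ} [DecidableEq ι] [AddMonoid ι]
    [GradedRing 𝒜] {J L : Ideal A} (hJ : J.IsHomogeneous 𝒜)
    (h : ∀ i, ∀ a ∈ 𝒜 i, a ∈ J → a ∈ L) : J ≤ L := fun a ha => by
  classical
  rw [← sum_support_decompose 𝒜 a]
  exact L.sum_mem fun i _ => h i _ (SetLike.coe_mem _) (hJ i ha)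

section Algebra

variable {K A : Type*} [Field K] [Ring A] [Algebra K A]

theorem eq_zero_of_mem_one_of_mul_mem {I : Ideal A} {a x : A} (ha : a ∈ (1 : Submodule K A))
    (hax : a * x ∈ I) (hx : x ∉ I) : a = 0 := by
  obtain ⟨c, rfl⟩ := Submodule.mem_one.1 ha
  by_contra hc
  rw [← Algebra.smul_def] at hax
  exact hx ((Submodule.smul_mem_iff (I.restrictScalars K) (by rintro rfl; simp at hc)).1 hax)

theorem exists_ne_zero_mul_eq_zero_of_finrank_lt {V W : Submodule K A} [FiniteDimensional K W]
    {x : A} (hVW : ∀ v ∈ V, v * x ∈ W) (h : finrank K W < finrank K V) :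
    ∃ u ∈ V, u ≠ 0 ∧ u * x = 0 := by
  have : FiniteDimensional K V := Module.finite_of_finrank_pos (by omega)
  let f : V →ₗ[K] W := (LinearMap.mulRight K x).restrict hVW
  obtain ⟨u, hu, hu0⟩ :=
    Submodule.exists_mem_ne_zero_of_ne_bot (LinearMap.ker_ne_bot_of_finrank_lt (f := f) h)
  exact ⟨u, u.2, fun h => hu0 (Subtype.ext h), congrArg Subtype.val hu⟩

theorem grade_two_le_of_mem {𝒜 : ℕ → Submodule K A} [SetLike.GradedMonoid 𝒜]
    (hdim2 : finrank K (𝒜 2) = 1) (hnd : ∀ z ∈ 𝒜 1, z ≠ 0 → ∃ y ∈ 𝒜 1, y * z ≠ 0)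
    {J : Ideal A} {u : A} (hu : u ∈ 𝒜 1) (hu0 : u ≠ 0) (huJ : u ∈ J) :
    𝒜 2 ≤ J.restrictScalars K := by
  obtain ⟨y, hy, hyu⟩ := hnd u hu hu0
  rw [eq_span_singleton_of_mem_of_finrank_eq_one hdim2 (SetLike.mul_mem_graded hy hu) hyu,
    Submodule.span_singleton_le_iff_mem]
  exact J.mul_mem_left y huJ

end Algebra

theorem stmt2_general {K A : Type*} [Field K] [Ring A] [Algebra K A]
    (𝒜 : ℕ → Submodule K A) [GradedAlgebra 𝒜]
    (hconn : 𝒜 0 = 1)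
    (htop : ∀ n, 3 ≤ n → 𝒜 n = ⊥)
    (hdim1 : 2 ≤ Module.finrank K (𝒜 1))
    (hdim2 : Module.finrank K (𝒜 2) = 1)
    (hnd : ∀ z ∈ 𝒜 1, z ≠ 0 →
      (∃ y ∈ 𝒜 1, z * y ≠ 0) ∧ (∃ y' ∈ 𝒜 1, y' * z ≠ 0))
    (I : Ideal A) (hI : GenInDeg1 ((𝒜 1 : Submodule K A) : Set A) I)
    (x : A) (hx : x ∈ 𝒜 1) (hxI : x ∉ I) :
    GenInDeg1 ((𝒜 1 : Submodule K A) : Set A) (colonIdeal I x) := by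
  obtain ⟨S, hS, rfl⟩ := hI
  set J := colonIdeal (Ideal.span S) x
  have hJ : J.IsHomogeneous 𝒜 :=
    (Ideal.homogeneous_span 𝒜 S fun y hy => ⟨1, hS hy⟩).colon 𝒜 hx
  have : FiniteDimensional K (𝒜 2) := Module.finite_of_finrank_eq_succ hdim2
  obtain ⟨u, hu, hu0, hux⟩ := exists_ne_zero_mul_eq_zero_of_finrank_lt (V := 𝒜 1) (W := 𝒜 2)
    (fun v hv => SetLike.mul_mem_graded hv hx) (by omega)
  have h2 : 𝒜 2 ≤ (Ideal.span ((𝒜 1 : Set A) ∩ J)).restrictScalars K :=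
    grade_two_le_of_mem hdim2 (fun z hz hz0 => (hnd z hz hz0).2) hu hu0
      (Ideal.subset_span ⟨hu, by simp [J, mem_colonIdeal, hux]⟩)
  refine ⟨(𝒜 1 : Set A) ∩ J, Set.inter_subset_left,
    le_antisymm (hJ.le_of_forall_homogeneous_mem fun n a ha haJ => ?_)
      (Ideal.span_le.2 Set.inter_subset_right)⟩
  match n with
  | 0 =>
    rw [eq_zero_of_mem_one_of_mul_mem (hconn ▸ ha) (mem_colonIdeal.1 haJ) hxI]
    exact zero_mem _
  | 1 => exact Ideal.subset_span ⟨ha, haJ⟩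
  | 2 => exact h2 ha
  | n + 3 =>
    rw [htop (n + 3) (by omega)] at ha
    rw [(Submodule.mem_bot K).1 ha]; exact zero_mem _

/-- Let `A` be a connected graded `K`-algebra generated in degree 1 with
`A_n = 0` for `n ≥ 3`, `2 ≤ dim_K A_1 < ∞`, `dim_K A_2 = 1`, and nondegenerate
multiplication pairing `A_1 × A_1 → A_2` (as for the mod-p cohomology of an infinite
Demushkin pro-p group).  Then for every left ideal `I` generated in degree 1 with
`I ≠ A_+` and every `x ∈ A_1 \ I`, the colon ideal `I : x` is generated in degree 1.
In particular `A` is universally Koszul. -/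
theorem stmt2 {K A : Type*} [Field K] [Ring A] [Algebra K A]
    (𝒜 : ℕ → Submodule K A) [GradedAlgebra 𝒜]
    (hconn : 𝒜 0 = 1)
    (hgen : Algebra.adjoin K ((𝒜 1 : Submodule K A) : Set A) = ⊤)
    (htop : ∀ n, 3 ≤ n → 𝒜 n = ⊥)
    (hfin : Module.Finite K (𝒜 1))
    (hdim1 : 2 ≤ Module.finrank K (𝒜 1))
    (hdim2 : Module.finrank K (𝒜 2) = 1)
    (hnd : ∀ z ∈ 𝒜 1, z ≠ 0 →
      (∃ y ∈ 𝒜 1, z * y ≠ 0) ∧ (∃ y' ∈ 𝒜 1, y' * z ≠ 0))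
    (I : Ideal A) (hI : GenInDeg1 ((𝒜 1 : Submodule K A) : Set A) I)
    (hIne : I ≠ augIdeal 𝒜)
    (x : A) (hx : x ∈ 𝒜 1) (hxI : x ∉ I) :
    GenInDeg1 ((𝒜 1 : Submodule K A) : Set A) (colonIdeal I x) :=
  stmt2_general 𝒜 hconn htop hdim1 hdim2 hnd I hI x hx hxI
end

section
/- Let K be a field and let B be a connected graded K-algebra that is the twisted extension B = A(t | x) of a graded subalgebra A, where t ∈ A_1 with t + t = 0 and x ∈ B_1. Let F be a Koszul filtration of A satisfying the property (♥): for every J ∈ F, the ideal J + A·t also belongs to F. Then the collection H = { I^e + (Y) : I ∈ F, Y ⊆ {x, t − x} }, where I^e denotes the left ideal of B generated by I and (Y) the left ideal of B generated by Y, is a Koszul filtration of B. -/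
/-- A collection `F` of left ideals is a Koszul filtration (relative to the set `D` of
degree-one elements and the augmentation ideal `P`). -/
def IsKoszulFiltration {A : Type*} [Ring A] (D : Set A) (P : Ideal A)
    (F : Set (Ideal A)) : Prop :=
  (∀ I ∈ F, GenInDeg1 D I) ∧ (⊥ : Ideal A) ∈ F ∧ P ∈ F ∧
    ∀ I ∈ F, I ≠ ⊥ →
      ∃ J ∈ F, J ≠ I ∧ ∃ x ∈ D, I = J ⊔ Ideal.span {x} ∧ colonIdeal J x ∈ F

lemma mem_colon {A : Type*} [Ring A] (I : Ideal A) (y a : A) :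
    a ∈ colonIdeal I y ↔ a * y ∈ I := by
  simp [colonIdeal, Submodule.mem_comap, LinearMap.toSpanSingleton_apply, smul_eq_mul]


section Aux

variable {K B : Type*} [Field K] [Ring B] [Algebra K B]

def evI (SA : Subalgebra K B) (C : Ideal SA) : Ideal B :=
  Ideal.span (Subtype.val '' (C : Set SA))

lemma evI_def (SA : Subalgebra K B) (C : Ideal SA) :
    evI SA C = Ideal.span (Subtype.val '' (C : Set SA)) := rfl

lemma mem_evI {SA : Subalgebra K B} {C : Ideal SA} {c : SA} (hc : c ∈ C) :
    (c : B) ∈ evI SA C :=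
  Ideal.subset_span ⟨c, hc, rfl⟩

lemma evI_span (SA : Subalgebra K B) (S : Set SA) :
    evI SA (Ideal.span S) = Ideal.span (Subtype.val '' S) := by
  apply le_antisymm
  · apply Ideal.span_le.mpr
    rintro _ ⟨c, hc, rfl⟩
    induction hc using Submodule.span_induction with
    | mem s hs => exact Ideal.subset_span ⟨s, hs, rfl⟩
    | zero => simp
    | add y z _ _ hy hz => push_cast; exact add_mem hy hz
    | smul a y _ hy =>
        have e : ((a • y : SA) : B) = (a : B) * (y : B) := by
          rw [smul_eq_mul]; push_cast; rfl
        rw [e]; exact Ideal.mul_mem_left _ _ hy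
  · apply Ideal.span_le.mpr
    rintro _ ⟨s, hs, rfl⟩
    exact mem_evI (Ideal.subset_span hs)

lemma evI_bot (SA : Subalgebra K B) : evI SA (⊥ : Ideal SA) = ⊥ := by
  simp [evI]

lemma evI_sup (SA : Subalgebra K B) (C D : Ideal SA) :
    evI SA (C ⊔ D) = evI SA C ⊔ evI SA D := by
  apply le_antisymm
  · apply Ideal.span_le.mpr
    rintro _ ⟨c, hc, rfl⟩
    obtain ⟨c₁, h₁, c₂, h₂, rfl⟩ := Submodule.mem_sup.mp hc
    push_cast
    exact add_mem (Submodule.mem_sup_left (mem_evI h₁)) (Submodule.mem_sup_right (mem_evI h₂))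
  · apply sup_le <;> exact Ideal.span_mono (Set.image_mono
      (by intro a ha; first
        | exact (Submodule.mem_sup_left ha)
        | exact (Submodule.mem_sup_right ha)))

lemma evI_singleton (SA : Subalgebra K B) (a : SA) :
    evI SA (Ideal.span {a}) = Ideal.span {(a : B)} := by
  rw [evI_span, Set.image_singleton]


structure Tw (SA : Subalgebra K B) (tA : SA) (t x : B) (DA : Set SA) : Prop where
  tval : (tA : B) = t
  rep : ∀ b : B, ∃ u v : SA, b = ↑u + ↑v * x
  uniq : ∀ u v u' v' : SA, (↑u + ↑v * x : B) = ↑u' + ↑v' * x → u = u' ∧ v = v'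
  xx : x * x = t * x
  tt : t + t = 0
  anti : ∀ a ∈ DA, x * (a : B) = -((a : B) * x)
  tmem : tA ∈ DA
  xcomm : ∀ v : SA, ∃ v' : SA, x * (v : B) = (v' : B) * x

namespace Tw

variable {SA : Subalgebra K B} {tA : SA} {t x : B} {DA : Set SA}

lemma txtx (tw : Tw SA tA t x DA) : t * x + t * x = 0 := by
  rw [← add_mul, tw.tt, zero_mul]

lemma xt (tw : Tw SA tA t x DA) : x * t = -(t * x) := by
  rw [← tw.tval]; exact tw.anti tA tw.tmem

/-- degree-one elements of `A` anticommute with `t`. -/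
lemma tanti (tw : Tw SA tA t x DA) : ∀ a ∈ DA, a * tA = -(tA * a) := by
  intro a ha
  have key : ((a * tA + tA * a : SA) : B) * x = 0 := by
    have h1 : x * (x * (a : B)) = ((a : B) * t) * x := by
      calc x * (x * (a:B)) = x * (-((a:B) * x)) := by rw [tw.anti a ha]
        _ = -((x * (a:B)) * x) := by rw [mul_neg, mul_assoc]
        _ = -((-((a:B) * x)) * x) := by rw [tw.anti a ha]
        _ = ((a:B) * x) * x := by rw [neg_mul, neg_neg]
        _ = (a:B) * (x * x) := by rw [mul_assoc]
        _ = (a:B) * (t * x) := by rw [tw.xx]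
        _ = ((a:B) * t) * x := by rw [mul_assoc]
    have h2 : x * (x * (a : B)) = -((t * (a : B)) * x) := by
      calc x * (x * (a:B)) = (x * x) * (a:B) := (mul_assoc _ _ _).symm
        _ = (t * x) * (a:B) := by rw [tw.xx]
        _ = t * (x * (a:B)) := mul_assoc _ _ _
        _ = t * (-((a:B) * x)) := by rw [tw.anti a ha]
        _ = -((t * (a:B)) * x) := by rw [mul_neg, mul_assoc]
    have h3 : ((a:B) * t) * x + ((t * (a:B))) * x = 0 := by
      rw [← h1, h2]; exact neg_add_cancel _
    push_cast
    rw [tw.tval, add_mul]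
    exact h3
  have h0 : (↑(0:SA) + ((a * tA + tA * a : SA) : B) * x : B) = ↑(0:SA) + ↑(0:SA) * x := by
    simpa using key
  have := (tw.uniq 0 (a * tA + tA * a) 0 0 h0).2
  exact eq_neg_of_add_eq_zero_left this

variable {C : Ideal SA}

/-- ideals generated in degree one are stable under right multiplication by `t`. -/
lemma Ct (tw : Tw SA tA t x DA) (hC : ∃ S ⊆ DA, C = Ideal.span S) :
    ∀ c ∈ C, c * tA ∈ C := by
  obtain ⟨S, hS, rfl⟩ := hC
  intro c hc
  induction hc using Submodule.span_induction with
  | mem s hs =>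
      rw [tw.tanti s (hS hs)]
      exact neg_mem (Ideal.mul_mem_left _ tA (Ideal.subset_span hs))
  | zero => simp
  | add y z _ _ ihy ihz => rw [add_mul]; exact add_mem ihy ihz
  | smul a y _ ih => rw [smul_eq_mul, mul_assoc]; exact Ideal.mul_mem_left _ _ ih

/-- `x` can be moved across an ideal generated in degree one. -/
lemma xC (tw : Tw SA tA t x DA) (hC : ∃ S ⊆ DA, C = Ideal.span S) :
    ∀ c ∈ C, ∃ c' ∈ C, x * (c : B) = (c' : B) * x := by
  obtain ⟨S, hS, rfl⟩ := hC
  intro c hc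
  induction hc using Submodule.span_induction with
  | mem s hs =>
      refine ⟨-s, neg_mem (Ideal.subset_span hs), ?_⟩
      push_cast
      rw [tw.anti s (hS hs)]; noncomm_ring
  | zero => exact ⟨0, zero_mem _, by simp⟩
  | add y z _ _ ihy ihz =>
      obtain ⟨y', hy', ey⟩ := ihy
      obtain ⟨z', hz', ez⟩ := ihz
      refine ⟨y' + z', add_mem hy' hz', ?_⟩
      push_cast
      rw [mul_add, ey, ez, add_mul]
  | smul a y _ ih =>
      obtain ⟨y', hy', ey⟩ := ih
      obtain ⟨a', ea⟩ := tw.xcomm a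
      refine ⟨a' * y', Ideal.mul_mem_left _ _ hy', ?_⟩
      have e : ((a • y : SA) : B) = (a : B) * (y : B) := by rw [smul_eq_mul]; push_cast; rfl
      rw [e]
      calc x * ((a:B) * (y:B)) = (x * (a:B)) * (y:B) := by rw [mul_assoc]
        _ = ((a':B) * x) * (y:B) := by rw [ea]
        _ = (a':B) * (x * (y:B)) := by rw [mul_assoc]
        _ = (a':B) * ((y':B) * x) := by rw [ey]
        _ = ((a' * y' : SA) : B) * x := by push_cast; rw [mul_assoc]

/-- right multiples `c·x`, `c ∈ C`, lie in the extension of `C`. -/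
lemma Cx (tw : Tw SA tA t x DA) (hC : ∃ S ⊆ DA, C = Ideal.span S) :
    ∀ q ∈ C, (q : B) * x ∈ evI SA C := by
  obtain ⟨S, hS, rfl⟩ := hC
  intro q hq
  induction hq using Submodule.span_induction with
  | mem s hs =>
      have h1 : x * (s : B) ∈ evI SA (Ideal.span S) :=
        Ideal.mul_mem_left _ x (mem_evI (Ideal.subset_span hs))
      have h2 : (s : B) * x = -(x * (s : B)) := by rw [tw.anti s (hS hs), neg_neg]
      rw [h2]; exact neg_mem h1
  | zero => simp
  | add y z _ _ ihy ihz => push_cast; rw [add_mul]; exact add_mem ihy ihz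
  | smul a y _ ih =>
      have e : ((a • y : SA) : B) * x = (a : B) * ((y : B) * x) := by
        rw [smul_eq_mul]; push_cast; rw [mul_assoc]
      rw [e]; exact Ideal.mul_mem_left _ _ ih

/-- membership characterization for `C^e`. -/
lemma mem0 (tw : Tw SA tA t x DA) (hC : ∃ S ⊆ DA, C = Ideal.span S) (z : B) :
    z ∈ evI SA C ↔ ∃ p ∈ C, ∃ q ∈ C, z = ↑p + ↑q * x := by
  constructor
  · intro hz
    induction hz using Submodule.span_induction with
    | mem b hb =>
        obtain ⟨c, hc, rfl⟩ := hb
        exact ⟨c, hc, 0, zero_mem _, by simp⟩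
    | zero => exact ⟨0, zero_mem _, 0, zero_mem _, by simp⟩
    | add y z _ _ ihy ihz =>
        obtain ⟨p₁, hp₁, q₁, hq₁, rfl⟩ := ihy
        obtain ⟨p₂, hp₂, q₂, hq₂, rfl⟩ := ihz
        refine ⟨p₁ + p₂, add_mem hp₁ hp₂, q₁ + q₂, add_mem hq₁ hq₂, ?_⟩
        push_cast; noncomm_ring
    | smul b z _ ih =>
        obtain ⟨u, v, rfl⟩ := tw.rep b
        obtain ⟨p, hp, q, hq, rfl⟩ := ih
        obtain ⟨p', hp', ep⟩ := tw.xC hC p hp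
        obtain ⟨q', hq', eq'⟩ := tw.xC hC q hq
        refine ⟨u * p, Ideal.mul_mem_left _ _ hp,
          u * q + (v * p' + v * (q' * tA)),
          add_mem (Ideal.mul_mem_left _ _ hq)
            (add_mem (Ideal.mul_mem_left _ _ hp')
              (Ideal.mul_mem_left _ _ (tw.Ct hC q' hq'))), ?_⟩
        rw [smul_eq_mul]
        have e2 : x * ((q:B) * x) = ((q':B) * t) * x := by
          rw [← mul_assoc, eq', mul_assoc, tw.xx, ← mul_assoc]
        push_cast [tw.tval]
        calc ((u:B) + ↑v * x) * (↑p + ↑q * x)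
            = ↑u * ↑p + (↑u * ↑q) * x + ↑v * (x * ↑p) + ↑v * (x * (↑q * x)) := by
              noncomm_ring
          _ = ↑u * ↑p + (↑u * ↑q) * x + ↑v * (↑p' * x) + ↑v * ((↑q' * t) * x) := by
              rw [ep, e2]
          _ = ↑u * ↑p + (↑u * ↑q + (↑v * ↑p' + ↑v * (↑q' * t))) * x := by noncomm_ring
  · rintro ⟨p, hp, q, hq, rfl⟩
    exact add_mem (mem_evI hp) (tw.Cx hC q hq)

/-- membership characterization for `C^e + (x)`. -/
lemma mem1 (tw : Tw SA tA t x DA) (hC : ∃ S ⊆ DA, C = Ideal.span S) (z : B) :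
    z ∈ evI SA C ⊔ Ideal.span {x} ↔ ∃ p ∈ C, ∃ v : SA, z = ↑p + ↑v * x := by
  constructor
  · intro hz
    rw [evI_def, ← Ideal.span_union] at hz
    induction hz using Submodule.span_induction with
    | mem b hb =>
        rcases hb with ⟨c, hc, rfl⟩ | hb
        · exact ⟨c, hc, 0, by simp⟩
        · rw [Set.mem_singleton_iff] at hb
          subst hb
          exact ⟨0, zero_mem _, 1, by simp⟩
    | zero => exact ⟨0, zero_mem _, 0, by simp⟩
    | add y z _ _ ihy ihz =>
        obtain ⟨p₁, hp₁, v₁, rfl⟩ := ihy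
        obtain ⟨p₂, hp₂, v₂, rfl⟩ := ihz
        refine ⟨p₁ + p₂, add_mem hp₁ hp₂, v₁ + v₂, ?_⟩
        push_cast; noncomm_ring
    | smul b z _ ih =>
        obtain ⟨u, v, rfl⟩ := tw.rep b
        obtain ⟨p, hp, w, rfl⟩ := ih
        obtain ⟨p', hp', ep⟩ := tw.xC hC p hp
        obtain ⟨w₁, ew⟩ := tw.xcomm w
        refine ⟨u * p, Ideal.mul_mem_left _ _ hp,
          u * w + (v * p' + v * (w₁ * tA)), ?_⟩
        rw [smul_eq_mul]
        have e2 : x * ((w:B) * x) = ((w₁:B) * t) * x := by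
          rw [← mul_assoc, ew, mul_assoc, tw.xx, ← mul_assoc]
        push_cast [tw.tval]
        calc ((u:B) + ↑v * x) * (↑p + ↑w * x)
            = ↑u * ↑p + (↑u * ↑w) * x + ↑v * (x * ↑p) + ↑v * (x * (↑w * x)) := by
              noncomm_ring
          _ = ↑u * ↑p + (↑u * ↑w) * x + ↑v * (↑p' * x) + ↑v * ((↑w₁ * t) * x) := by
              rw [ep, e2]
          _ = ↑u * ↑p + (↑u * ↑w + (↑v * ↑p' + ↑v * (↑w₁ * t))) * x := by noncomm_ring
  · rintro ⟨p, hp, v, rfl⟩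
    exact add_mem (Submodule.mem_sup_left (mem_evI hp))
      (Submodule.mem_sup_right (Submodule.mem_span_singleton.mpr ⟨(v:B), by rw [smul_eq_mul]⟩))

/-- membership characterization for `C^e + (t - x)`. -/
lemma mem2 (tw : Tw SA tA t x DA) (hC : ∃ S ⊆ DA, C = Ideal.span S) (z : B) :
    z ∈ evI SA C ⊔ Ideal.span {t - x} ↔
      ∃ u v : SA, z = ↑u + ↑v * x ∧ u + v * tA ∈ C := by
  constructor
  · intro hz
    rw [evI_def, ← Ideal.span_union] at hz
    induction hz using Submodule.span_induction with
    | mem b hb =>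
        rcases hb with ⟨c, hc, rfl⟩ | hb
        · exact ⟨c, 0, by simp, by simpa using hc⟩
        · rw [Set.mem_singleton_iff] at hb
          subst hb
          refine ⟨tA, -1, ?_, by simp⟩
          push_cast [tw.tval]; noncomm_ring
    | zero => exact ⟨0, 0, by simp, by simp⟩
    | add y z _ _ ihy ihz =>
        obtain ⟨u₁, v₁, rfl, h₁⟩ := ihy
        obtain ⟨u₂, v₂, rfl, h₂⟩ := ihz
        refine ⟨u₁ + u₂, v₁ + v₂, by push_cast; noncomm_ring, ?_⟩
        have e : (u₁ + u₂) + (v₁ + v₂) * tA = (u₁ + v₁ * tA) + (u₂ + v₂ * tA) := by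
          noncomm_ring
        rw [e]; exact add_mem h₁ h₂
    | smul b z _ ih =>
        obtain ⟨a, a₀, rfl⟩ := tw.rep b
        obtain ⟨u, v, rfl, hcond⟩ := ih
        obtain ⟨c', hc', ec⟩ := tw.xC hC (u + v * tA) hcond
        obtain ⟨v₁, ev⟩ := tw.xcomm v
        have eu : (u : B) = ((u + v * tA : SA) : B) - (v:B) * t := by
          push_cast [tw.tval]; noncomm_ring
        have ez : x * ((u:B) + ↑v * x) = (c' : B) * x := by
          have h1 : x * ((v:B) * t) = -((v₁:B) * (t * x)) := by
            rw [← mul_assoc, ev, mul_assoc, tw.xt, mul_neg]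
          have h2 : x * ((v:B) * x) = (v₁:B) * (t * x) := by
            rw [← mul_assoc, ev, mul_assoc, tw.xx]
          calc x * ((u:B) + ↑v * x)
              = x * (u:B) + x * ((v:B) * x) := by rw [mul_add]
            _ = x * (((u + v * tA : SA) : B) - (v:B) * t) + (v₁:B) * (t * x) := by
                rw [← eu, h2]
            _ = x * ((u + v * tA : SA) : B) - x * ((v:B) * t) + (v₁:B) * (t * x) := by
                rw [mul_sub]
            _ = (c' : B) * x + (v₁:B) * (t * x) + (v₁:B) * (t * x) := by
                rw [ec, h1]; noncomm_ring
            _ = (c' : B) * x + (v₁:B) * (t * x + t * x) := by noncomm_ring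
            _ = (c' : B) * x := by rw [tw.txtx, mul_zero, add_zero]
        refine ⟨a * u, a * v + a₀ * c', ?_, ?_⟩
        · rw [smul_eq_mul]
          push_cast
          calc ((a:B) + ↑a₀ * x) * (↑u + ↑v * x)
              = ↑a * ↑u + (↑a * ↑v) * x + ↑a₀ * (x * (↑u + ↑v * x)) := by noncomm_ring
            _ = ↑a * ↑u + (↑a * ↑v) * x + ↑a₀ * ((c' : B) * x) := by rw [ez]
            _ = ↑a * ↑u + (↑a * ↑v + ↑a₀ * ↑c') * x := by noncomm_ring
        · have e : a * u + (a * v + a₀ * c') * tA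
              = a * (u + v * tA) + a₀ * (c' * tA) := by noncomm_ring
          rw [e]
          exact add_mem (Ideal.mul_mem_left _ _ hcond)
            (Ideal.mul_mem_left _ _ (tw.Ct hC c' hc'))
  · rintro ⟨u, v, rfl, hc⟩
    have e : ((u:B) + ↑v * x : B) = ((u + v * tA : SA) : B) - (v:B) * (t - x) := by
      push_cast [tw.tval]; noncomm_ring
    rw [e]
    exact sub_mem (Submodule.mem_sup_left (mem_evI hc))
      (Submodule.mem_sup_right (Submodule.mem_span_singleton.mpr ⟨(v:B), by rw [smul_eq_mul]⟩))

lemma extract (tw : Tw SA tA t x DA) {a p q : SA} (h : (a : B) = ↑p + ↑q * x) :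
    a = p ∧ q = 0 := by
  have := tw.uniq a 0 p q (by simpa using h)
  exact ⟨this.1, this.2.symm⟩

lemma extract_zero (tw : Tw SA tA t x DA) {p q : SA} (h : (↑p + ↑q * x : B) = 0) :
    p = 0 ∧ q = 0 :=
  tw.uniq p q 0 0 (by simpa using h)

lemma wx' (tw : Tw SA tA t x DA) (u v : SA) :
    ((u:B) + ↑v * x) * x = ((u + v * tA : SA) : B) * x := by
  have e : ((u + v * tA : SA) : B) = ↑u + ↑v * t := by push_cast [tw.tval]; rfl
  rw [e]
  calc ((u:B) + ↑v * x) * x = ↑u * x + ↑v * (x * x) := by noncomm_ring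
    _ = ↑u * x + ↑v * (t * x) := by rw [tw.xx]
    _ = (↑u + ↑v * t) * x := by noncomm_ring

/-- product of a normal form with a degree-one element of `A`. -/
lemma mulform (tw : Tw SA tA t x DA) (u v : SA) {a : SA} (ha : a ∈ DA) :
    (↑u + ↑v * x) * (a : B) = ↑(u * a) + ↑(-(v * a)) * x := by
  have e : (↑(u * a) + ↑(-(v * a)) * x : B) = ↑u * ↑a + -((↑v * ↑a) * x) := by
    push_cast; noncomm_ring
  rw [e]
  calc (↑u + ↑v * x : B) * ↑a = ↑u * ↑a + ↑v * (x * ↑a) := by noncomm_ring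
    _ = ↑u * ↑a + ↑v * (-(↑a * x)) := by rw [tw.anti a ha]
    _ = ↑u * ↑a + -((↑v * ↑a) * x) := by noncomm_ring

variable {ya : SA}

/-- colon computation, shape `C^e`. -/
lemma colon0 (tw : Tw SA tA t x DA) (hC : ∃ S ⊆ DA, C = Ideal.span S)
    (hD : ∃ S ⊆ DA, colonIdeal C ya = Ideal.span S) (hya : ya ∈ DA) :
    colonIdeal (evI SA C) (ya : B) = evI SA (colonIdeal C ya) := by
  ext b
  rw [mem_colon]
  obtain ⟨u, v, rfl⟩ := tw.rep b
  rw [tw.mulform u v hya, tw.mem0 hC, tw.mem0 hD]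
  constructor
  · rintro ⟨p, hp, q, hq, heq⟩
    obtain ⟨h1, h2⟩ := tw.uniq _ _ _ _ heq
    refine ⟨u, ?_, v, ?_, rfl⟩
    · rw [mem_colon]; exact h1 ▸ hp
    · rw [mem_colon]
      have : -(v * ya) ∈ C := h2 ▸ hq
      simpa using neg_mem this
  · rintro ⟨p, hp, q, hq, heq⟩
    obtain ⟨h1, h2⟩ := tw.uniq _ _ _ _ heq
    rw [mem_colon] at hp hq
    exact ⟨u * ya, h1 ▸ hp, -(v * ya), neg_mem (h2 ▸ hq), rfl⟩

/-- colon computation, shape `C^e + (x)`. -/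
lemma colon1 (tw : Tw SA tA t x DA) (hC : ∃ S ⊆ DA, C = Ideal.span S)
    (hD : ∃ S ⊆ DA, colonIdeal C ya = Ideal.span S) (hya : ya ∈ DA) :
    colonIdeal (evI SA C ⊔ Ideal.span {x}) (ya : B)
      = evI SA (colonIdeal C ya) ⊔ Ideal.span {x} := by
  ext b
  rw [mem_colon]
  obtain ⟨u, v, rfl⟩ := tw.rep b
  rw [tw.mulform u v hya, tw.mem1 hC, tw.mem1 hD]
  constructor
  · rintro ⟨p, hp, w, heq⟩
    obtain ⟨h1, h2⟩ := tw.uniq _ _ _ _ heq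
    refine ⟨u, ?_, v, rfl⟩
    rw [mem_colon]; exact h1 ▸ hp
  · rintro ⟨p, hp, w, heq⟩
    obtain ⟨h1, h2⟩ := tw.uniq _ _ _ _ heq
    rw [mem_colon] at hp
    exact ⟨u * ya, h1 ▸ hp, -(v * ya), rfl⟩

/-- colon computation, shape `C^e + (t - x)`. -/
lemma colon2 (tw : Tw SA tA t x DA) (hC : ∃ S ⊆ DA, C = Ideal.span S)
    (hD : ∃ S ⊆ DA, colonIdeal C ya = Ideal.span S) (hya : ya ∈ DA) :
    colonIdeal (evI SA C ⊔ Ideal.span {t - x}) (ya : B)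
      = evI SA (colonIdeal C ya) ⊔ Ideal.span {t - x} := by
  have idy : ∀ u v : SA, u * ya + (-(v * ya)) * tA = (u + v * tA) * ya := by
    intro u v
    have e : (-(v * ya)) * tA = (v * tA) * ya := by
      rw [neg_mul, mul_assoc, tw.tanti ya hya, mul_neg, neg_neg, ← mul_assoc]
    rw [e, ← add_mul]
  ext b
  rw [mem_colon]
  obtain ⟨u, v, rfl⟩ := tw.rep b
  rw [tw.mulform u v hya, tw.mem2 hC, tw.mem2 hD]
  constructor
  · rintro ⟨U, V, heq, hcond⟩
    obtain ⟨h1, h2⟩ := tw.uniq _ _ _ _ heq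
    refine ⟨u, v, rfl, ?_⟩
    rw [mem_colon, ← idy, h1, h2]
    exact hcond
  · rintro ⟨U, V, heq, hcond⟩
    obtain ⟨h1, h2⟩ := tw.uniq _ _ _ _ heq
    refine ⟨u * ya, -(v * ya), rfl, ?_⟩
    rw [idy]
    rw [mem_colon] at hcond
    rw [h1, h2]
    exact hcond

lemma botgen : ∃ S ⊆ DA, (⊥ : Ideal SA) = Ideal.span S :=
  ⟨∅, Set.empty_subset _, Ideal.span_empty.symm⟩

/-- colon of the zero ideal by `x`. -/
lemma colon_bot_x (tw : Tw SA tA t x DA) :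
    colonIdeal (⊥ : Ideal B) x = evI SA (⊥ : Ideal SA) ⊔ Ideal.span {t - x} := by
  ext b
  rw [mem_colon, Submodule.mem_bot]
  obtain ⟨u, v, rfl⟩ := tw.rep b
  rw [tw.wx' u v, tw.mem2 botgen]
  constructor
  · intro h
    have h0 : (↑(0:SA) + ((u + v * tA : SA) : B) * x : B) = 0 := by simpa using h
    have := (tw.extract_zero h0).2
    exact ⟨u, v, rfl, by rw [Submodule.mem_bot]; exact this⟩
  · rintro ⟨U, V, heq, hcond⟩
    obtain ⟨h1, h2⟩ := tw.uniq _ _ _ _ heq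
    rw [Submodule.mem_bot] at hcond
    rw [h1, h2, hcond]
    simp

/-- colon of the zero ideal by `t - x`. -/
lemma colon_bot_tx (tw : Tw SA tA t x DA) :
    colonIdeal (⊥ : Ideal B) (t - x) = evI SA (⊥ : Ideal SA) ⊔ Ideal.span {x} := by
  ext b
  rw [mem_colon, Submodule.mem_bot]
  obtain ⟨u, v, rfl⟩ := tw.rep b
  have ebtx : ((u:B) + ↑v * x) * (t - x) = ↑(u * tA) + ↑(-u) * x := by
    have e : (↑(u * tA) + ↑(-u) * x : B) = (u:B) * t + (-(u:B)) * x := by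
      push_cast [tw.tval]; rfl
    rw [e]
    calc ((u:B) + ↑v * x) * (t - x)
        = ↑u * t + (-↑u) * x + (↑v * (x * t) - ↑v * (x * x)) := by noncomm_ring
      _ = ↑u * t + (-↑u) * x + (↑v * (-(t * x)) - ↑v * (t * x)) := by rw [tw.xt, tw.xx]
      _ = ↑u * t + (-↑u) * x + -(↑v * (t * x + t * x)) := by noncomm_ring
      _ = ↑u * t + (-↑u) * x := by rw [tw.txtx]; simp
  rw [ebtx, tw.mem1 botgen]
  constructor
  · intro h
    have h2 := (tw.extract_zero h).2
    have hu : u = 0 := by simpa using h2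
    exact ⟨0, Submodule.zero_mem _, v, by rw [hu]⟩
  · rintro ⟨p, hp, w, heq⟩
    rw [Submodule.mem_bot] at hp
    subst hp
    obtain ⟨h1, h2⟩ := tw.uniq _ _ _ _ heq
    rw [h1]
    simp

variable {C' : Ideal SA}

lemma inj0 (tw : Tw SA tA t x DA) (hC : ∃ S ⊆ DA, C = Ideal.span S)
    (hC' : ∃ S ⊆ DA, C' = Ideal.span S) (h : evI SA C = evI SA C') : C = C' := by
  have key : ∀ (D D' : Ideal SA), (∃ S ⊆ DA, D' = Ideal.span S) →
      evI SA D ≤ evI SA D' → D ≤ D' := by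
    intro D D' hg hle a ha
    obtain ⟨p, hp, q, hq, heq⟩ := (tw.mem0 hg _).mp (hle (mem_evI ha))
    exact (tw.extract heq).1 ▸ hp
  exact le_antisymm (key C C' hC' h.le) (key C' C hC h.ge)

lemma inj1 (tw : Tw SA tA t x DA) (hC : ∃ S ⊆ DA, C = Ideal.span S)
    (hC' : ∃ S ⊆ DA, C' = Ideal.span S)
    (h : evI SA C ⊔ Ideal.span {x} = evI SA C' ⊔ Ideal.span {x}) : C = C' := by
  have key : ∀ (D D' : Ideal SA), (∃ S ⊆ DA, D' = Ideal.span S) →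
      evI SA D ⊔ Ideal.span {x} ≤ evI SA D' ⊔ Ideal.span {x} → D ≤ D' := by
    intro D D' hg hle a ha
    obtain ⟨p, hp, w, heq⟩ :=
      (tw.mem1 hg _).mp (hle (Submodule.mem_sup_left (mem_evI ha)))
    exact (tw.extract heq).1 ▸ hp
  exact le_antisymm (key C C' hC' h.le) (key C' C hC h.ge)

lemma inj2 (tw : Tw SA tA t x DA) (hC : ∃ S ⊆ DA, C = Ideal.span S)
    (hC' : ∃ S ⊆ DA, C' = Ideal.span S)
    (h : evI SA C ⊔ Ideal.span {t - x} = evI SA C' ⊔ Ideal.span {t - x}) : C = C' := by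
  have key : ∀ (D D' : Ideal SA), (∃ S ⊆ DA, D = Ideal.span S) →
      (∃ S ⊆ DA, D' = Ideal.span S) →
      evI SA D ⊔ Ideal.span {t - x} ≤ evI SA D' ⊔ Ideal.span {t - x} → D ≤ D' := by
    intro D D' hgD hg hle a ha
    have hmem : (a : B) ∈ evI SA D ⊔ Ideal.span {t - x} :=
      (tw.mem2 hgD _).mpr ⟨a, 0, by simp, by simpa using ha⟩
    obtain ⟨U, V, heq, hcond⟩ := (tw.mem2 hg _).mp (hle hmem)
    obtain ⟨h1, h2⟩ := tw.extract heq
    rw [h2] at hcond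
    rw [h1]
    simpa using hcond
  exact le_antisymm (key C C' hC hC' h.le) (key C' C hC' hC h.ge)


end Tw

end Aux

section Graded2
variable {K B : Type*} [Field K] [Ring B] [Algebra K B]
variable (𝒝 : ℕ → Submodule K B) [GradedAlgebra 𝒝]

lemma decompose_sum_pos_zero :
    ∀ (s : Finset ℕ) (f : ℕ → B), (∀ i ∈ s, ∃ m, f i ∈ 𝒝 (m + 1)) →
      ((DirectSum.decompose 𝒝 (∑ i ∈ s, f i)) 0 : B) = 0 := by
  intro s
  induction s using Finset.induction_on with
  | empty => intro f _; simp
  | insert _ _ hni ih =>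
      intro f hf
      rename_i a s'
      rw [Finset.sum_insert hni, DirectSum.decompose_add]
      obtain ⟨m, hm⟩ := hf a (Finset.mem_insert_self a s')
      have h1 : ((DirectSum.decompose 𝒝 (f a)) 0 : B) = 0 :=
        DirectSum.decompose_of_mem_ne 𝒝 hm (Nat.succ_ne_zero m)
      have h2 := ih f (fun i hi => hf i (Finset.mem_insert_of_mem hi))
      rw [DirectSum.add_apply]
      push_cast
      rw [h1, h2, add_zero]

lemma decompose_mul_x_zero {x : B} (hx1 : x ∈ 𝒝 1) (w : B) :
    ((DirectSum.decompose 𝒝 (w * x)) 0 : B) = 0 := by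
  classical
  conv_lhs => rw [← DirectSum.sum_support_decompose 𝒝 w, Finset.sum_mul]
  refine decompose_sum_pos_zero 𝒝 _ _ ?_
  intro i _
  exact ⟨i, SetLike.mul_mem_graded (SetLike.coe_mem _) hx1⟩

lemma pos_part_mem (SA : Subalgebra K B)
    (hAhom : ∀ y ∈ SA, ∀ n : ℕ, ((DirectSum.decompose 𝒝 y n : 𝒝 n) : B) ∈ SA)
    (u : B) (hu : u ∈ SA) (h0 : ((DirectSum.decompose 𝒝 u) 0 : B) = 0) :
    u ∈ evI SA (Ideal.span {y : SA | ∃ n : ℕ, (y : B) ∈ 𝒝 (n + 1)}) := by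
  classical
  rw [← DirectSum.sum_support_decompose 𝒝 u]
  apply Submodule.sum_mem
  intro i hi
  have hi0 : i ≠ 0 := by
    intro h
    subst h
    exact DFinsupp.mem_support_iff.mp hi (by
      exact_mod_cast Subtype.ext h0)
  obtain ⟨k, rfl⟩ := Nat.exists_eq_succ_of_ne_zero hi0
  have hmemSA : ((DirectSum.decompose 𝒝 u) (k + 1) : B) ∈ SA := hAhom u hu (k + 1)
  have hmem : (⟨_, hmemSA⟩ : SA) ∈ {y : SA | ∃ n : ℕ, (y : B) ∈ 𝒝 (n + 1)} :=
    ⟨k, SetLike.coe_mem _⟩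
  exact mem_evI (Ideal.subset_span hmem)

end Graded2


/-- Let `B = A(t | x)` be a twisted extension of a graded subalgebra
`A`, and let `F` be a Koszul filtration of `A` satisfying (♥): `J ∈ F ⟹ J + A·t ∈ F`.
Then `H = { I^e + (Y) : I ∈ F, Y ⊆ {x, t − x} }` is a Koszul filtration of `B`. -/
theorem stmt9 {K B : Type*} [Field K] [Ring B] [Algebra K B]
    (𝒝 : ℕ → Submodule K B) [GradedAlgebra 𝒝]
    (hconn : 𝒝 0 = 1)
    (hgen : Algebra.adjoin K ((𝒝 1 : Submodule K B) : Set B) = ⊤)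
    (SA : Subalgebra K B)
    (hAhom : ∀ y ∈ SA, ∀ n : ℕ, ((DirectSum.decompose 𝒝 y n : 𝒝 n) : B) ∈ SA)
    (hAgen : Algebra.adjoin K ((SA : Set B) ∩ ((𝒝 1 : Submodule K B) : Set B)) = SA)
    (t x : B) (htA : t ∈ SA) (ht1 : t ∈ 𝒝 1) (htt : t + t = 0) (hx1 : x ∈ 𝒝 1)
    (hrep : ∀ b : B, ∃ u ∈ SA, ∃ v ∈ SA, b = u + v * x)
    (huniq : ∀ u ∈ SA, ∀ v ∈ SA, ∀ u' ∈ SA, ∀ v' ∈ SA,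
      u + v * x = u' + v' * x → u = u' ∧ v = v')
    (hanticom : ∀ a ∈ SA, a ∈ 𝒝 1 → x * a = -(a * x))
    (hxx : x * x = t * x)
    (F : Set (Ideal SA))
    (hF : IsKoszulFiltration {y : SA | (y : B) ∈ 𝒝 1}
      (Ideal.span {y : SA | ∃ n : ℕ, (y : B) ∈ 𝒝 (n + 1)}) F)
    -- property (♥): `J ∈ F ⟹ J + A·t ∈ F`
    (hheart : ∀ J ∈ F, J ⊔ Ideal.span {(⟨t, htA⟩ : SA)} ∈ F) :
    IsKoszulFiltration ((𝒝 1 : Submodule K B) : Set B) (augIdeal 𝒝)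
      {I : Ideal B | ∃ IA ∈ F, ∃ Y ⊆ ({x, t - x} : Set B),
        I = Ideal.span (Subtype.val '' (IA : Set SA)) ⊔ Ideal.span Y} := by

  classical
  obtain ⟨hFgen, hFbot, hFP, hFstep⟩ := hF
  -- the twisted-extension data, in subtype form
  have hxcomm' : ∀ b : B, b ∈ SA → ∃ v' : SA, x * b = (v' : B) * x := by
    intro b hb
    rw [← hAgen] at hb
    induction hb using Algebra.adjoin_induction with
    | mem a ha =>
        refine ⟨⟨-a, neg_mem ha.1⟩, ?_⟩
        show x * a = -a * x
        rw [hanticom a ha.1 ha.2]; noncomm_ring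
    | algebraMap r =>
        refine ⟨algebraMap K SA r, ?_⟩
        rw [Subalgebra.coe_algebraMap]
        exact (Algebra.commutes r x).symm
    | add a b _ _ iha ihb =>
        obtain ⟨a', ea⟩ := iha
        obtain ⟨b', eb⟩ := ihb
        exact ⟨a' + b', by push_cast; rw [mul_add, ea, eb, add_mul]⟩
    | mul a b _ _ iha ihb =>
        obtain ⟨a', ea⟩ := iha
        obtain ⟨b', eb⟩ := ihb
        exact ⟨a' * b', by
          push_cast
          rw [← mul_assoc, ea, mul_assoc, eb, ← mul_assoc]⟩
  have tw : Tw SA ⟨t, htA⟩ t x {y : SA | (y : B) ∈ 𝒝 1} := by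
    refine ⟨rfl, ?_, ?_, hxx, htt, ?_, ht1, fun v => hxcomm' ↑v v.2⟩
    · intro b
      obtain ⟨u, hu, v, hv, h⟩ := hrep b
      exact ⟨⟨u, hu⟩, ⟨v, hv⟩, h⟩
    · intro u v u' v' h
      obtain ⟨h1, h2⟩ := huniq u u.2 v v.2 u' u'.2 v' v'.2 h
      exact ⟨Subtype.ext h1, Subtype.ext h2⟩
    · intro a ha
      exact hanticom ↑a a.2 ha
  have hgenF : ∀ C ∈ F, ∃ S ⊆ {y : SA | (y : B) ∈ 𝒝 1}, C = Ideal.span S := hFgen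
  -- membership helpers for the filtration `H`
  have memHs : ∀ C ∈ F, ∀ Y0 ⊆ ({x, t - x} : Set B), evI SA C ⊔ Ideal.span Y0 ∈
      {I : Ideal B | ∃ IA ∈ F, ∃ Y ⊆ ({x, t - x} : Set B),
        I = Ideal.span (Subtype.val '' (IA : Set SA)) ⊔ Ideal.span Y} :=
    fun C hC Y0 hY0 => ⟨C, hC, Y0, hY0, rfl⟩
  have memHs0 : ∀ C ∈ F, evI SA C ∈
      {I : Ideal B | ∃ IA ∈ F, ∃ Y ⊆ ({x, t - x} : Set B),
        I = Ideal.span (Subtype.val '' (IA : Set SA)) ⊔ Ideal.span Y} :=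
    fun C hC => ⟨C, hC, ∅, Set.empty_subset _, by rw [Ideal.span_empty, sup_bot_eq]; rfl⟩
  have memHsBot : (⊥ : Ideal B) ∈
      {I : Ideal B | ∃ IA ∈ F, ∃ Y ⊆ ({x, t - x} : Set B),
        I = Ideal.span (Subtype.val '' (IA : Set SA)) ⊔ Ideal.span Y} :=
    ⟨⊥, hFbot, ∅, Set.empty_subset _, by
      rw [Ideal.span_empty, sup_bot_eq]; exact (evI_bot SA).symm⟩
  refine ⟨?_, memHsBot, ?_, ?_⟩
  · -- generated in degree one
    rintro I ⟨IA, hIA, Y, hY, rfl⟩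
    obtain ⟨S, hS, rfl⟩ := hgenF IA hIA
    refine ⟨Subtype.val '' S ∪ Y, ?_, ?_⟩
    · rintro b (⟨s, hs, rfl⟩ | hb)
      · exact hS hs
      · rcases hY hb with rfl | rfl
        · exact hx1
        · exact Submodule.sub_mem _ ht1 hx1
    · rw [Ideal.span_union, ← evI_def, evI_span]
  · -- the augmentation ideal belongs to `H`
    refine ⟨Ideal.span {y : SA | ∃ n : ℕ, (y : B) ∈ 𝒝 (n + 1)}, hFP, {x}, by simp, ?_⟩
    rw [← evI_def]
    apply le_antisymm
    · show Ideal.span (⋃ n : ℕ, ((𝒝 (n + 1) : Submodule K B) : Set B)) ≤ _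
      refine Ideal.span_le.mpr ?_
      intro b hb
      obtain ⟨n, hbn⟩ := Set.mem_iUnion.mp hb
      obtain ⟨u, v, rfl⟩ := tw.rep b
      apply add_mem
      · apply Submodule.mem_sup_left
        apply pos_part_mem 𝒝 SA hAhom ↑u u.2
        have hb0 : ((DirectSum.decompose 𝒝 ((u : B) + ↑v * x)) 0 : B) = 0 :=
          DirectSum.decompose_of_mem_ne 𝒝 hbn (Nat.succ_ne_zero n)
        have hvx0 := decompose_mul_x_zero 𝒝 hx1 (↑v : B)
        rw [DirectSum.decompose_add, DirectSum.add_apply] at hb0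
        push_cast at hb0
        rw [hvx0, add_zero] at hb0
        exact hb0
      · exact Submodule.mem_sup_right
          (Submodule.mem_span_singleton.mpr ⟨(v : B), by rw [smul_eq_mul]⟩)
    · apply sup_le
      · rw [evI_span]
        refine Ideal.span_le.mpr ?_
        rintro _ ⟨y, ⟨n, hy⟩, rfl⟩
        exact Ideal.subset_span (Set.mem_iUnion.mpr ⟨n, hy⟩)
      · refine Ideal.span_le.mpr ?_
        intro b hb
        rw [Set.mem_singleton_iff] at hb
        subst hb
        exact Ideal.subset_span (Set.mem_iUnion.mpr ⟨0, hx1⟩)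
  · -- the chain condition
    -- shape handlers
    have hsh0 : ∀ C ∈ F, C ≠ ⊥ →
        ∃ J ∈ {I : Ideal B | ∃ IA ∈ F, ∃ Y ⊆ ({x, t - x} : Set B),
            I = Ideal.span (Subtype.val '' (IA : Set SA)) ⊔ Ideal.span Y},
          J ≠ evI SA C ∧ ∃ y ∈ ((𝒝 1 : Submodule K B) : Set B),
            evI SA C = J ⊔ Ideal.span {y} ∧
            colonIdeal J y ∈ {I : Ideal B | ∃ IA ∈ F, ∃ Y ⊆ ({x, t - x} : Set B),
              I = Ideal.span (Subtype.val '' (IA : Set SA)) ⊔ Ideal.span Y} := by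
      intro C hC hCbot
      obtain ⟨JA, hJA, hne', ya, hya, hCeq, hcol⟩ := hFstep C hC hCbot
      refine ⟨evI SA JA, memHs0 JA hJA, ?_, (ya : B), hya, ?_, ?_⟩
      · intro h
        exact hne' (tw.inj0 (hgenF JA hJA) (hgenF C hC) h)
      · rw [hCeq, evI_sup, evI_singleton]
      · rw [tw.colon0 (hgenF JA hJA) (hgenF _ hcol) hya]
        exact memHs0 _ hcol
    have hsh1 : ∀ C ∈ F, ∀ I0 : Ideal B, I0 = evI SA C ⊔ Ideal.span {x} → I0 ≠ ⊥ →
        ∃ J ∈ {I : Ideal B | ∃ IA ∈ F, ∃ Y ⊆ ({x, t - x} : Set B),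
            I = Ideal.span (Subtype.val '' (IA : Set SA)) ⊔ Ideal.span Y},
          J ≠ I0 ∧ ∃ y ∈ ((𝒝 1 : Submodule K B) : Set B),
            I0 = J ⊔ Ideal.span {y} ∧
            colonIdeal J y ∈ {I : Ideal B | ∃ IA ∈ F, ∃ Y ⊆ ({x, t - x} : Set B),
              I = Ideal.span (Subtype.val '' (IA : Set SA)) ⊔ Ideal.span Y} := by
      intro C hC I0 hI0 hneI
      by_cases hCbot : C = ⊥
      · subst hCbot
        rw [evI_bot, bot_sup_eq] at hI0
        refine ⟨⊥, memHsBot, fun h => hneI h.symm, x, hx1, ?_, ?_⟩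
        · rw [bot_sup_eq]; exact hI0
        · rw [tw.colon_bot_x]
          exact memHs ⊥ hFbot {t - x} (by simp)
      · obtain ⟨JA, hJA, hne', ya, hya, hCeq, hcol⟩ := hFstep C hC hCbot
        refine ⟨evI SA JA ⊔ Ideal.span {x}, memHs JA hJA {x} (by simp), ?_,
          (ya : B), hya, ?_, ?_⟩
        · intro h
          rw [hI0] at h
          exact hne' (tw.inj1 (hgenF JA hJA) (hgenF C hC) h)
        · rw [hI0, hCeq, evI_sup, evI_singleton, sup_right_comm]
        · rw [tw.colon1 (hgenF JA hJA) (hgenF _ hcol) hya]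
          exact memHs _ hcol {x} (by simp)
    have hsh2 : ∀ C ∈ F, ∀ I0 : Ideal B, I0 = evI SA C ⊔ Ideal.span {t - x} → I0 ≠ ⊥ →
        ∃ J ∈ {I : Ideal B | ∃ IA ∈ F, ∃ Y ⊆ ({x, t - x} : Set B),
            I = Ideal.span (Subtype.val '' (IA : Set SA)) ⊔ Ideal.span Y},
          J ≠ I0 ∧ ∃ y ∈ ((𝒝 1 : Submodule K B) : Set B),
            I0 = J ⊔ Ideal.span {y} ∧
            colonIdeal J y ∈ {I : Ideal B | ∃ IA ∈ F, ∃ Y ⊆ ({x, t - x} : Set B),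
              I = Ideal.span (Subtype.val '' (IA : Set SA)) ⊔ Ideal.span Y} := by
      intro C hC I0 hI0 hneI
      by_cases hCbot : C = ⊥
      · subst hCbot
        rw [evI_bot, bot_sup_eq] at hI0
        refine ⟨⊥, memHsBot, fun h => hneI h.symm, t - x,
          Submodule.sub_mem _ ht1 hx1, ?_, ?_⟩
        · rw [bot_sup_eq]; exact hI0
        · rw [tw.colon_bot_tx]
          exact memHs ⊥ hFbot {x} (by simp)
      · obtain ⟨JA, hJA, hne', ya, hya, hCeq, hcol⟩ := hFstep C hC hCbot
        refine ⟨evI SA JA ⊔ Ideal.span {t - x}, memHs JA hJA {t - x} (by simp), ?_,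
          (ya : B), hya, ?_, ?_⟩
        · intro h
          rw [hI0] at h
          exact hne' (tw.inj2 (hgenF JA hJA) (hgenF C hC) h)
        · rw [hI0, hCeq, evI_sup, evI_singleton, sup_right_comm]
        · rw [tw.colon2 (hgenF JA hJA) (hgenF _ hcol) hya]
          exact memHs _ hcol {t - x} (by simp)
    rintro I ⟨IA, hIA, Y, hY, rfl⟩ hne
    by_cases hxY : x ∈ Y
    · by_cases htY : t - x ∈ Y
      · -- Y = {x, t - x}
        have hYeq : Y = {x, t - x} :=
          Set.Subset.antisymm hY
            (Set.insert_subset_iff.mpr ⟨hxY, Set.singleton_subset_iff.mpr htY⟩)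
        have key : evI SA IA ⊔ Ideal.span ({x, t - x} : Set B)
            = evI SA (IA ⊔ Ideal.span {(⟨t, htA⟩ : SA)}) ⊔ Ideal.span {x} := by
          rw [evI_sup, evI_singleton]
          have e1 : Ideal.span ({x, t - x} : Set B)
              = Ideal.span {x} ⊔ Ideal.span {t - x} := by
            rw [Ideal.span_insert]
          have e2 : Ideal.span {x} ⊔ Ideal.span {t - x}
              = Ideal.span {((⟨t, htA⟩ : SA) : B)} ⊔ Ideal.span {x} := by
            apply le_antisymm
            · apply sup_le
              · exact le_sup_right
              · refine Ideal.span_le.mpr (Set.singleton_subset_iff.mpr ?_)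
                refine Submodule.sub_mem _ ?_ ?_
                · exact Submodule.mem_sup_left (Ideal.subset_span rfl)
                · exact Submodule.mem_sup_right (Ideal.subset_span rfl)
            · apply sup_le
              · refine Ideal.span_le.mpr (Set.singleton_subset_iff.mpr ?_)
                have hmem : (t - x) + x ∈ Ideal.span {x} ⊔ Ideal.span {t - x} :=
                  add_mem (Submodule.mem_sup_right (Ideal.subset_span rfl))
                    (Submodule.mem_sup_left (Ideal.subset_span rfl))
                have he : (t - x) + x = ((⟨t, htA⟩ : SA) : B) := by
                  show (t - x) + x = t
                  abel
                rwa [he] at hmem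
              · exact le_sup_left
          rw [e1, e2, ← sup_assoc]
        rw [hYeq] at hne ⊢
        rw [show Ideal.span (Subtype.val '' (IA : Set SA)) = evI SA IA from rfl,
          key] at hne ⊢
        exact hsh1 _ (hheart IA hIA) _ rfl hne
      · -- Y = {x}
        have hYeq : Y = {x} := by
          apply Set.Subset.antisymm
          · intro b hb
            rcases hY hb with rfl | rfl
            · rfl
            · exact absurd hb htY
          · exact Set.singleton_subset_iff.mpr hxY
        rw [hYeq] at hne ⊢
        exact hsh1 IA hIA _ rfl hne
    · by_cases htY : t - x ∈ Y
      · -- Y = {t - x}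
        have hYeq : Y = {t - x} := by
          apply Set.Subset.antisymm
          · intro b hb
            rcases hY hb with rfl | rfl
            · exact absurd hb hxY
            · rfl
          · exact Set.singleton_subset_iff.mpr htY
        rw [hYeq] at hne ⊢
        exact hsh2 IA hIA _ rfl hne
      · -- Y = ∅
        have hYeq : Y = ∅ := by
          apply Set.eq_empty_iff_forall_notMem.mpr
          intro b hb
          rcases hY hb with rfl | rfl
          · exact hxY hb
          · exact htY hb
        rw [hYeq, Ideal.span_empty, sup_bot_eq] at hne ⊢
        have hIAne : IA ≠ ⊥ := by
          intro h
          rw [h] at hne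
          exact hne (evI_bot SA)
        exact hsh0 IA hIA hIAne
end

section
/- Let d ≥ 2 and let H = F_2[T, X_2, …, X_d]/(X_i² − T·X_i : 2 ≤ i ≤ d) with t, α_2, …, α_d the images of the variables. Then for every element v of the F_2-span of {t, α_2, …, α_d} with v ≠ 0 and v ≠ t, the annihilator (0) : v = { h ∈ H : h·v = 0 } equals the ideal of H generated by t + v. -/
open MvPolynomial

/-- The defining relations `X_i² − T·X_i` (with `T = X 0`) of the cohomology of a
superpythagorean field. -/
noncomputable def spRel (d : ℕ) [NeZero d] : Ideal (MvPolynomial (Fin d) (ZMod 2)) :=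
  Ideal.span {p | ∃ i : Fin d, i ≠ 0 ∧ p = X i ^ 2 - X 0 * X i}

/-- The algebra `H = F₂[T, X₂, …, X_d]/(X_i² − T·X_i)`. -/
abbrev SPH (d : ℕ) [NeZero d] := MvPolynomial (Fin d) (ZMod 2) ⧸ spRel d

/-- The images `t = gen d 0`, `α_i = gen d i` of the variables in `H`. -/
noncomputable def gen (d : ℕ) [NeZero d] (i : Fin d) : SPH d :=
  Ideal.Quotient.mk (spRel d) (X i)

/-- The degree-one component `H_1`, the `F₂`-span of `{t, α₂, …, α_d}`. -/
noncomputable def H1 (d : ℕ) [NeZero d] : Submodule (ZMod 2) (SPH d) :=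
  Submodule.span (ZMod 2) (Set.range (gen d))

section Poly
variable {d : ℕ} [NeZero d]

def wgt (j : Fin d) (e : Fin d →₀ ℕ) (k : Fin d) : ℕ :=
  if k = 0 ∨ k = j then 0 else e k - 1

noncomputable def redE (j : Fin d) (e : Fin d →₀ ℕ) : Fin d →₀ ℕ :=
  Finsupp.equivFunOnFinite.symm fun i =>
    if i = 0 then e 0
    else if i = j then e j + ∑ k : Fin d, wgt j e k
    else min (e i) 1

lemma redE_apply (j : Fin d) (e : Fin d →₀ ℕ) (i : Fin d) :
    redE j e i = if i = 0 then e 0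
    else if i = j then e j + ∑ k : Fin d, wgt j e k
    else min (e i) 1 := rfl

lemma wgt_add_single (j i : Fin d) (e : Fin d →₀ ℕ) (m : ℕ) (k : Fin d) (hki : k ≠ i) :
    wgt j (e + Finsupp.single i m) k = wgt j e k := by
  unfold wgt
  by_cases hk : k = 0 ∨ k = j
  · simp [hk]
  · simp [hk, Finsupp.single_apply, Ne.symm hki]

lemma wgt_sum_add (j i : Fin d) (hi0 : i ≠ 0) (hij : i ≠ j) (e : Fin d →₀ ℕ) (m : ℕ) :
    ∑ k : Fin d, wgt j (e + Finsupp.single i m) k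
      = (∑ k : Fin d, wgt j e k) + ((e i + m - 1) - (e i - 1)) := by
  rw [← Finset.add_sum_erase _ _ (Finset.mem_univ i),
      ← Finset.add_sum_erase _ (wgt j e) (Finset.mem_univ i)]
  rw [Finset.sum_congr rfl (fun b hb => wgt_add_single j i e m b (Finset.mem_erase.mp hb).1)]
  unfold wgt
  rw [if_neg (by tauto), if_neg (by tauto)]
  simp only [Finsupp.add_apply, Finsupp.single_apply, if_pos rfl, if_true]
  omega

lemma wgt_sum_add_j (j : Fin d) (e : Finsupp (Fin d) ℕ) (m : ℕ) :
    ∑ k : Fin d, wgt j (e + Finsupp.single j m) k = ∑ k : Fin d, wgt j e k := by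
  refine Finset.sum_congr rfl (fun b _ => ?_)
  by_cases hbj : b = j
  · subst hbj; unfold wgt; rw [if_pos (Or.inr rfl), if_pos (Or.inr rfl)]
  · exact wgt_add_single j j e m b hbj

lemma redE_add_single_j (j : Fin d) (hj : j ≠ 0) (e : Fin d →₀ ℕ) :
    redE j (e + Finsupp.single j 1) = redE j e + Finsupp.single j 1 := by
  ext k
  rw [Finsupp.add_apply, redE_apply, redE_apply, wgt_sum_add_j]
  by_cases hk0 : k = 0
  · subst hk0; simp [Ne.symm hj, Finsupp.single_apply, hj]
  by_cases hkj : k = j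
  · subst hkj
    simp only [hk0, if_false, if_pos rfl, Finsupp.add_apply, Finsupp.single_apply,
      if_pos rfl, if_true]
    ring
  · simp [hk0, hkj, Finsupp.single_apply, Ne.symm hkj]

lemma redE_key (j i : Fin d) (hj : j ≠ 0) (hi0 : i ≠ 0) (hij : i ≠ j) (e : Fin d →₀ ℕ) :
    redE j (e + Finsupp.single i 2)
      = redE j (e + Finsupp.single j 1 + Finsupp.single i 1) := by
  ext k
  rw [redE_apply, redE_apply, wgt_sum_add j i hi0 hij,
    wgt_sum_add j i hi0 hij, wgt_sum_add_j]
  by_cases hk0 : k = 0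
  · subst hk0; simp [Finsupp.single_apply, Ne.symm hj, Ne.symm hi0, hj, hi0]
  by_cases hkj : k = j
  · subst hkj
    simp only [hk0, if_false, if_pos rfl]
    simp [Finsupp.add_apply, Finsupp.single_apply, hij, Ne.symm hij]
    omega
  · simp only [hk0, hkj, if_false, Finsupp.add_apply, Finsupp.single_apply]
    by_cases hki : i = k
    · subst hki
      simp [hkj, Ne.symm hkj]
    · simp [hki, Ne.symm hkj]

noncomputable def NF (j : Fin d) (p : MvPolynomial (Fin d) (ZMod 2)) :
    MvPolynomial (Fin d) (ZMod 2) :=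
  AddMonoidAlgebra.mapDomain (redE j) p

lemma NF_add (j : Fin d) (p q : MvPolynomial (Fin d) (ZMod 2)) :
    NF j (p + q) = NF j p + NF j q := AddMonoidAlgebra.mapDomain_add _ _ _

lemma NF_sub (j : Fin d) (p q : MvPolynomial (Fin d) (ZMod 2)) :
    NF j (p - q) = NF j p - NF j q :=
  by rw [eq_sub_iff_add_eq, ← NF_add, sub_add_cancel]

lemma NF_monomial (j : Fin d) (e : Fin d →₀ ℕ) (c : ZMod 2) :
    NF j (monomial e c) = monomial (redE j e) c := by
  simp [NF, ← single_eq_monomial, AddMonoidAlgebra.mapDomain_single]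

noncomputable def Jdl (j : Fin d) : Ideal (MvPolynomial (Fin d) (ZMod 2)) :=
  Ideal.span {p | ∃ i : Fin d, i ≠ 0 ∧ i ≠ j ∧ p = X i ^ 2 - X j * X i}

lemma monomial_mul_Xsq (e : Fin d →₀ ℕ) (c : ZMod 2) (i : Fin d) :
    monomial e c * X i ^ 2 = monomial (e + Finsupp.single i 2) c := by
  rw [X_pow_eq_monomial, monomial_mul, mul_one]

lemma monomial_mul_XX (e : Fin d →₀ ℕ) (c : ZMod 2) (j i : Fin d) :
    monomial e c * (X j * X i) = monomial (e + Finsupp.single j 1 + Finsupp.single i 1) c := by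
  rw [X, X, monomial_mul, monomial_mul, mul_one, mul_one, add_assoc]

lemma NF_mul_gen (j i : Fin d) (hj : j ≠ 0) (hi0 : i ≠ 0) (hij : i ≠ j)
    (P : MvPolynomial (Fin d) (ZMod 2)) :
    NF j (P * (X i ^ 2 - X j * X i)) = 0 := by
  induction P using MvPolynomial.induction_on' with
  | monomial e c =>
    rw [mul_sub, NF_sub, monomial_mul_Xsq, monomial_mul_XX, NF_monomial, NF_monomial,
      redE_key j i hj hi0 hij, sub_self]
  | add p q hp hq =>
    rw [add_mul, NF_add, hp, hq, add_zero]

lemma NF_eq_zero_of_mem (j : Fin d) (hj : j ≠ 0) {P : MvPolynomial (Fin d) (ZMod 2)}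
    (hP : P ∈ Jdl j) : NF j P = 0 := by
  have key : ∀ Q, NF j (Q * P) = 0 := by
    refine Submodule.span_induction
      (p := fun x _ => ∀ Q, NF j (Q * x) = 0) ?_ ?_ ?_ ?_ hP
    · rintro x ⟨i, hi0, hij, rfl⟩ Q
      exact NF_mul_gen j i hj hi0 hij Q
    · intro Q; rw [mul_zero]; exact AddMonoidAlgebra.mapDomain_zero _
    · intro x y _ _ hx hy Q
      rw [mul_add, NF_add, hx, hy, add_zero]
    · intro a x _ hx Q
      rw [smul_eq_mul, ← mul_assoc]
      exact hx _
  simpa using key 1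

lemma NF_mul_X (j : Fin d) (hj : j ≠ 0) (P : MvPolynomial (Fin d) (ZMod 2)) :
    NF j (P * X j) = X j * NF j P := by
  induction P using MvPolynomial.induction_on' with
  | monomial e c =>
    rw [X, monomial_mul, mul_one, NF_monomial, NF_monomial, monomial_mul, one_mul,
      redE_add_single_j j hj, add_comm (Finsupp.single j 1)]
  | add p q hp hq =>
    rw [add_mul, NF_add, hp, hq, NF_add, mul_add]

lemma mk_monomial_redE (j : Fin d) (hj : j ≠ 0) (e : Fin d →₀ ℕ) (c : ZMod 2) :
    Ideal.Quotient.mk (Jdl j) (monomial e c)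
      = Ideal.Quotient.mk (Jdl j) (monomial (redE j e) c) := by
  suffices h : ∀ n (e : Fin d →₀ ℕ), (∑ k : Fin d, wgt j e k) ≤ n →
      Ideal.Quotient.mk (Jdl j) (monomial e c)
        = Ideal.Quotient.mk (Jdl j) (monomial (redE j e) c) from h _ e le_rfl
  have base : ∀ (e : Fin d →₀ ℕ), (∑ k : Fin d, wgt j e k) = 0 →
      Ideal.Quotient.mk (Jdl j) (monomial e c)
        = Ideal.Quotient.mk (Jdl j) (monomial (redE j e) c) := by
    intro e h0
    have hk0 : ∀ k ∈ (Finset.univ : Finset (Fin d)), wgt j e k = 0 :=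
      (Finset.sum_eq_zero_iff).mp h0
    have hre : redE j e = e := by
      ext k
      rw [redE_apply]
      by_cases hk : k = 0
      · subst hk; rw [if_pos rfl]
      by_cases hkj : k = j
      · subst hkj; rw [if_neg hk, if_pos rfl, h0, add_zero]
      · rw [if_neg hk, if_neg hkj]
        have := hk0 k (Finset.mem_univ k)
        unfold wgt at this
        rw [if_neg (by tauto)] at this
        omega
    rw [hre]
  intro n
  induction n with
  | zero =>
    intro e he
    exact base e (Nat.le_zero.mp he)
  | succ n ih =>
    intro e he
    by_cases h0 : ∑ k : Fin d, wgt j e k = 0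
    · exact base e h0
    obtain ⟨i, hi⟩ : ∃ i, wgt j e i ≠ 0 := by
      by_contra hc; push_neg at hc
      exact h0 (Finset.sum_eq_zero fun k _ => hc k)
    have hi0 : i ≠ 0 := fun h => hi (by unfold wgt; rw [if_pos (Or.inl h)])
    have hij : i ≠ j := fun h => hi (by unfold wgt; rw [if_pos (Or.inr h)])
    have hei : 2 ≤ e i := by
      unfold wgt at hi; rw [if_neg (by tauto)] at hi; omega
    set e' := e - Finsupp.single i 2 with he'def
    have hee : e = e' + Finsupp.single i 2 := by
      ext k
      rw [Finsupp.add_apply, he'def, Finsupp.tsub_apply, Finsupp.single_apply]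
      by_cases hk : i = k
      · subst hk; simp; omega
      · simp [hk]
    have hs1 := wgt_sum_add j i hi0 hij e' 2
    rw [← hee] at hs1
    have hs2 := wgt_sum_add j i hi0 hij (e' + Finsupp.single j 1) 1
    have hs3 := wgt_sum_add_j j e' 1
    have hs4 : ((e' + Finsupp.single j 1 : Fin d →₀ ℕ)) i = e' i := by
      rw [Finsupp.add_apply, Finsupp.single_apply, if_neg (fun h : j = i => hij h.symm),
        add_zero]
    have hbound : ∑ k : Fin d, wgt j (e' + Finsupp.single j 1 + Finsupp.single i 1) k ≤ n := by
      rw [hs2, hs3, hs4]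
      omega
    have hdiff : monomial e c - monomial (e' + Finsupp.single j 1 + Finsupp.single i 1) c
        = monomial e' c * (X i ^ 2 - X j * X i) := by
      rw [mul_sub, monomial_mul_Xsq, monomial_mul_XX, hee]
    have hmem : monomial e' c * (X i ^ 2 - X j * X i) ∈ Jdl j :=
      Ideal.mul_mem_left _ _ (Ideal.subset_span ⟨i, hi0, hij, rfl⟩)
    have h1 : Ideal.Quotient.mk (Jdl j) (monomial e c)
        = Ideal.Quotient.mk (Jdl j) (monomial (e' + Finsupp.single j 1 + Finsupp.single i 1) c) :=
      Ideal.Quotient.eq.mpr (hdiff ▸ hmem)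
    have h2 : redE j (e' + Finsupp.single j 1 + Finsupp.single i 1) = redE j e := by
      rw [hee]; exact (redE_key j i hj hi0 hij e').symm
    rw [h1, ih _ hbound, h2]

lemma mk_NF (j : Fin d) (hj : j ≠ 0) (P : MvPolynomial (Fin d) (ZMod 2)) :
    Ideal.Quotient.mk (Jdl j) P = Ideal.Quotient.mk (Jdl j) (NF j P) := by
  induction P using MvPolynomial.induction_on' with
  | monomial e c => rw [NF_monomial]; exact mk_monomial_redE j hj e c
  | add p q hp hq => rw [NF_add, map_add, map_add, hp, hq]

lemma mem_Jdl_of_mul_X (j : Fin d) (hj : j ≠ 0) {Q : MvPolynomial (Fin d) (ZMod 2)}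
    (h : Q * X j ∈ Jdl j) : Q ∈ Jdl j := by
  have h1 : X j * NF j Q = 0 := by
    rw [← NF_mul_X j hj]; exact NF_eq_zero_of_mem j hj h
  have h2 : NF j Q = 0 := by
    rcases mul_eq_zero.mp h1 with h' | h'
    · exact absurd h' (X_ne_zero j)
    · exact h'
  rw [← Ideal.Quotient.eq_zero_iff_mem, mk_NF j hj, h2, map_zero]

noncomputable def sig (j : Fin d) :
    MvPolynomial (Fin d) (ZMod 2) →ₐ[ZMod 2] MvPolynomial (Fin d) (ZMod 2) :=
  aeval (fun i => if i = 0 then X j else X i)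

noncomputable def spRel' : Ideal (MvPolynomial (Fin d) (ZMod 2)) :=
  Ideal.span {p | ∃ i : Fin d, i ≠ 0 ∧ p = X i ^ 2 - X 0 * X i}

lemma sig_spRel_le (j : Fin d) (hj : j ≠ 0) :
    (spRel' : Ideal (MvPolynomial (Fin d) (ZMod 2)))
      ≤ Ideal.comap (sig j).toRingHom (Jdl j) := by
  rw [spRel', Ideal.span_le]
  rintro p ⟨i, hi0, rfl⟩
  simp only [SetLike.mem_coe, Ideal.mem_comap, AlgHom.toRingHom_eq_coe, RingHom.coe_coe,
    map_sub, map_mul, map_pow, sig, aeval_X, eq_self_iff_true, if_true, hi0, if_false]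
  by_cases hij : i = j
  · subst hij; rw [pow_two, sub_self]; exact zero_mem _
  · exact Ideal.subset_span ⟨i, hi0, hij, rfl⟩

lemma Jdl_le (j : Fin d) :
    Jdl j ≤ spRel' ⊔ Ideal.span {(X 0 + X j : MvPolynomial (Fin d) (ZMod 2))} := by
  rw [Jdl, Ideal.span_le]
  rintro p ⟨i, hi0, hij, rfl⟩
  have heq : (X i ^ 2 - X j * X i : MvPolynomial (Fin d) (ZMod 2))
      = (X i ^ 2 - X 0 * X i) + (X 0 + X j) * X i := by
    rw [CharTwo.sub_eq_add]
    ring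
  rw [heq]
  exact add_mem (Ideal.mem_sup_left (Ideal.subset_span ⟨i, hi0, rfl⟩))
    (Ideal.mem_sup_right (Ideal.mul_mem_right _ _ (Ideal.subset_span rfl)))

lemma sub_sig_mem (j : Fin d) (P : MvPolynomial (Fin d) (ZMod 2)) :
    P - sig j P ∈ Ideal.span {(X 0 + X j : MvPolynomial (Fin d) (ZMod 2))} := by
  set I := Ideal.span {(X 0 + X j : MvPolynomial (Fin d) (ZMod 2))} with hI
  have key : (Ideal.Quotient.mkₐ (ZMod 2) I).comp (sig j) = Ideal.Quotient.mkₐ (ZMod 2) I := by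
    apply MvPolynomial.algHom_ext
    intro i
    simp only [AlgHom.comp_apply, sig, aeval_X, Ideal.Quotient.mkₐ_eq_mk]
    by_cases hi : i = 0
    · subst hi
      rw [if_pos rfl]
      rw [Ideal.Quotient.eq]
      have : (X j - X 0 : MvPolynomial (Fin d) (ZMod 2)) = X 0 + X j := by
        rw [CharTwo.sub_eq_add]; ring
      rw [this]
      exact Ideal.subset_span rfl
    · rw [if_neg hi]
  have h2 : Ideal.Quotient.mk I (sig j P) = Ideal.Quotient.mk I P := by
    have := DFunLike.congr_fun key P
    simpa using this
  exact Ideal.Quotient.eq.mp h2.symm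

lemma key_poly (j : Fin d) (hj : j ≠ 0) {P : MvPolynomial (Fin d) (ZMod 2)}
    (h : P * X j ∈ (spRel' : Ideal (MvPolynomial (Fin d) (ZMod 2)))) :
    P ∈ spRel' ⊔ Ideal.span {(X 0 + X j : MvPolynomial (Fin d) (ZMod 2))} := by
  have h1 : sig j (P * X j) ∈ Jdl j := sig_spRel_le j hj h
  rw [map_mul] at h1
  have hXj : sig j (X j) = X j := by rw [sig, aeval_X, if_neg hj]
  rw [hXj] at h1
  have h2 : sig j P ∈ Jdl j := mem_Jdl_of_mul_X j hj h1
  have h3 := Jdl_le j h2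
  have h4 := sub_sig_mem j P
  have h5 : P = (P - sig j P) + sig j P := by ring
  rw [h5]
  exact add_mem (Ideal.mem_sup_right h4) h3

end Poly


section Quot
variable {d : ℕ} [NeZero d]

lemma spRel'_eq : (spRel' : Ideal (MvPolynomial (Fin d) (ZMod 2))) = spRel d := rfl

lemma hxx (x : SPH d) : x + x = 0 := by
  rw [← two_smul (ZMod 2) x, (by decide : (2 : ZMod 2) = 0), zero_smul]

lemma hneg (x : SPH d) : -x = x :=
  neg_eq_of_add_eq_zero_left (hxx x)

lemma sq_eq {v : SPH d} (hv : v ∈ H1 d) : v * v = gen d 0 * v := by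
  refine Submodule.span_induction (p := fun x _ => x * x = gen d 0 * x) ?_ ?_ ?_ ?_ hv
  · rintro x ⟨i, rfl⟩
    show gen d i * gen d i = gen d 0 * gen d i
    rw [gen, gen, ← map_mul, ← map_mul, Ideal.Quotient.eq]
    by_cases hi : i = 0
    · subst hi; rw [sub_self]; exact zero_mem _
    · rw [← pow_two]
      exact Ideal.subset_span ⟨i, hi, rfl⟩
  · simp
  · intro x y _ _ hx hy
    have : (x + y) * (x + y) = x * x + y * y + (x * y + x * y) := by ring
    rw [this, hxx, add_zero, hx, hy, mul_add]
  · intro a x _ hx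
    rcases (by decide : ∀ a : ZMod 2, a = 0 ∨ a = 1) a with h | h <;> subst h <;> simp [hx]

lemma mul_t_add_self {v : SPH d} (hv : v ∈ H1 d) : (gen d 0 + v) * v = 0 := by
  rw [add_mul, sq_eq hv, hxx]

lemma ann_gen (j : Fin d) (hj : j ≠ 0) {h : SPH d} (hh : h * gen d j = 0) :
    h ∈ Ideal.span {gen d 0 + gen d j} := by
  obtain ⟨P, rfl⟩ := Ideal.Quotient.mk_surjective h
  have hP : P * X j ∈ (spRel' : Ideal (MvPolynomial (Fin d) (ZMod 2))) := by
    rw [spRel'_eq, ← Ideal.Quotient.eq_zero_iff_mem, map_mul]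
    exact hh
  have h1 := key_poly j hj hP
  rw [spRel'_eq] at h1
  have h2 := Ideal.mem_map_of_mem (Ideal.Quotient.mk (spRel d)) h1
  rw [Ideal.map_sup, Ideal.map_quotient_self, bot_sup_eq, Ideal.map_span,
    Set.image_singleton, map_add] at h2
  exact h2

noncomputable def ulist (c : Fin d → ZMod 2) (j : Fin d) :
    Fin d → MvPolynomial (Fin d) (ZMod 2) :=
  fun i => if i = j then ∑ k : Fin d, MvPolynomial.C (c k) * X k else X i

lemma mk_ulist_mem (c : Fin d → ZMod 2) (j i : Fin d) :
    Ideal.Quotient.mk (spRel d) (ulist c j i) ∈ H1 d := by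
  unfold ulist
  by_cases hij : i = j
  · rw [if_pos hij, map_sum]
    refine Submodule.sum_mem _ fun k _ => ?_
    have : Ideal.Quotient.mk (spRel d) (MvPolynomial.C (c k) * X k) = c k • gen d k := by
      rcases (by decide : ∀ a : ZMod 2, a = 0 ∨ a = 1) (c k) with h | h <;> rw [h] <;>
        simp [gen]
    rw [this]
    exact Submodule.smul_mem _ _ (Submodule.subset_span ⟨k, rfl⟩)
  · rw [if_neg hij]
    exact Submodule.subset_span ⟨i, rfl⟩

noncomputable def Phi (c : Fin d → ZMod 2) (j : Fin d) (hj : j ≠ 0) :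
    SPH d →ₐ[ZMod 2] SPH d :=
  Ideal.Quotient.liftₐ (spRel d)
    ((Ideal.Quotient.mkₐ (ZMod 2) (spRel d)).comp (aeval (ulist c j)))
    (by
      intro a ha
      have hle : spRel d ≤ RingHom.ker ((Ideal.Quotient.mkₐ (ZMod 2) (spRel d)).comp
          (aeval (ulist c j))).toRingHom := by
        refine Ideal.span_le.mpr ?_
        rintro p ⟨i, hi0, rfl⟩
        have h0 : ulist c j 0 = X 0 := by
          unfold ulist; rw [if_neg (fun h => hj h.symm)]
        simp only [SetLike.mem_coe, RingHom.mem_ker, AlgHom.toRingHom_eq_coe, RingHom.coe_coe,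
          AlgHom.comp_apply, map_sub, map_pow, map_mul, aeval_X, Ideal.Quotient.mkₐ_eq_mk, h0]
        have hwH : Ideal.Quotient.mk (spRel d) (ulist c j i) ∈ H1 d := mk_ulist_mem c j i
        rw [pow_two, sq_eq hwH, ← gen, sub_self]
      exact RingHom.mem_ker.mp (hle ha))

lemma Phi_gen (c : Fin d → ZMod 2) (j : Fin d) (hj : j ≠ 0) (i : Fin d) :
    Phi c j hj (gen d i) = Ideal.Quotient.mk (spRel d) (ulist c j i) := by
  rw [Phi, gen]
  show ((Ideal.Quotient.mkₐ (ZMod 2) (spRel d)).comp (aeval (ulist c j))) (X i) = _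
  simp [aeval_X]

lemma Phi_gen_ne (c : Fin d → ZMod 2) (j : Fin d) (hj : j ≠ 0) {i : Fin d} (hij : i ≠ j) :
    Phi c j hj (gen d i) = gen d i := by
  rw [Phi_gen]; unfold ulist; rw [if_neg hij]; rfl

lemma Phi_gen_j (c : Fin d → ZMod 2) (j : Fin d) (hj : j ≠ 0) :
    Phi c j hj (gen d j) = ∑ k : Fin d, c k • gen d k := by
  rw [Phi_gen]; unfold ulist; rw [if_pos rfl, map_sum]
  refine Finset.sum_congr rfl fun k _ => ?_
  rcases (by decide : ∀ a : ZMod 2, a = 0 ∨ a = 1) (c k) with h | h <;> rw [h] <;> simp [gen]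

lemma Phi_Phi_gen (c : Fin d → ZMod 2) (j : Fin d) (hj : j ≠ 0) (hcj : c j = 1) (i : Fin d) :
    Phi c j hj (Phi c j hj (gen d i)) = gen d i := by
  by_cases hij : i = j
  · rw [hij]
    rw [Phi_gen_j, map_sum]
    have hterm : ∀ k, Phi c j hj (c k • gen d k)
        = c k • gen d k + (if k = j then (∑ m : Fin d, c m • gen d m) - gen d j else 0) := by
      intro k
      by_cases hkj : k = j
      · subst hkj
        rw [map_smul, Phi_gen_j, if_pos rfl, hcj, one_smul, one_smul]
        abel
      · rw [map_smul, Phi_gen_ne c j hj hkj, if_neg hkj, add_zero]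
    rw [Finset.sum_congr rfl (fun k _ => hterm k), Finset.sum_add_distrib,
      Finset.sum_ite_eq' Finset.univ j, if_pos (Finset.mem_univ j)]
    set w := ∑ m : Fin d, c m • gen d m
    rw [add_sub_assoc' w w (gen d j), hxx, zero_sub, hneg]
  · rw [Phi_gen_ne c j hj hij, Phi_gen_ne c j hj hij]

lemma Phi_invol (c : Fin d → ZMod 2) (j : Fin d) (hj : j ≠ 0) (hcj : c j = 1) (x : SPH d) :
    Phi c j hj (Phi c j hj x) = x := by
  obtain ⟨P, rfl⟩ := Ideal.Quotient.mk_surjective x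
  induction P using MvPolynomial.induction_on with
  | C a =>
    have h1 : Ideal.Quotient.mk (spRel d) (MvPolynomial.C a)
        = algebraMap (ZMod 2) (SPH d) a := rfl
    rw [h1, AlgHom.commutes, AlgHom.commutes]
  | add p q hp hq => rw [map_add, map_add, map_add, hp, hq]
  | mul_X p i hp =>
    rw [map_mul, map_mul, map_mul, hp,
      show Ideal.Quotient.mk (spRel d) (X i) = gen d i from rfl, Phi_Phi_gen c j hj hcj]

end Quot

/-- For every `v` in the `F₂`-span of `{t, α₂, …, α_d}` with `v ≠ 0`
and `v ≠ t`, the annihilator `(0) : v` equals the ideal generated by `t + v`. -/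
theorem stmt10 (d : ℕ) [NeZero d] (hd : 2 ≤ d)
    (v : SPH d) (hv : v ∈ H1 d) (hv0 : v ≠ 0) (hvt : v ≠ gen d 0) :
    colonIdeal (⊥ : Ideal (SPH d)) v = Ideal.span {gen d 0 + v} := by
  rw [H1, Submodule.mem_span_range_iff_exists_fun] at hv
  obtain ⟨c, hc⟩ := hv
  have hv1 : v ∈ H1 d := by
    rw [H1, Submodule.mem_span_range_iff_exists_fun]; exact ⟨c, hc⟩
  obtain ⟨j, hj0, hcj⟩ : ∃ j : Fin d, j ≠ 0 ∧ c j = 1 := by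
    by_contra hcon
    push_neg at hcon
    have hzero : ∀ k : Fin d, k ≠ 0 → c k • gen d k = 0 := by
      intro k hk
      rcases (by decide : ∀ a : ZMod 2, a = 0 ∨ a = 1) (c k) with h | h
      · rw [h, zero_smul]
      · exact absurd h (hcon k hk)
    have hv' : v = c 0 • gen d 0 := by
      rw [← hc, Finset.sum_eq_single 0 (fun k _ hk => hzero k hk) (fun h => absurd (Finset.mem_univ 0) h)]
    rcases (by decide : ∀ a : ZMod 2, a = 0 ∨ a = 1) (c 0) with h | h
    · exact hv0 (by rw [hv', h, zero_smul])
    · exact hvt (by rw [hv', h, one_smul])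
  have hPhiv : Phi c j hj0 v = gen d j := by
    have h1 : Phi c j hj0 (gen d j) = v := by rw [Phi_gen_j, hc]
    have := Phi_invol c j hj0 hcj (gen d j)
    rw [h1] at this
    exact this
  have hPhit : Phi c j hj0 (gen d 0) = gen d 0 :=
    Phi_gen_ne c j hj0 (fun h => hj0 h.symm)
  ext x
  simp only [colonIdeal, Submodule.mem_comap, LinearMap.toSpanSingleton_apply,
    Ideal.mem_bot, smul_eq_mul]
  constructor
  · intro hx
    have h1 : Phi c j hj0 x * gen d j = 0 := by
      rw [← hPhiv, ← map_mul, hx, map_zero]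
    have h2 := ann_gen j hj0 h1
    rw [Ideal.mem_span_singleton'] at h2 ⊢
    obtain ⟨a, ha⟩ := h2
    refine ⟨Phi c j hj0 a, ?_⟩
    have hPhigj : Phi c j hj0 (gen d j) = v := by rw [Phi_gen_j, hc]
    have h3 := congrArg (Phi c j hj0) ha
    rw [map_mul, map_add, hPhit, hPhigj, Phi_invol c j hj0 hcj] at h3
    exact h3
  · intro hx
    rw [Ideal.mem_span_singleton'] at hx
    obtain ⟨a, ha⟩ := hx
    rw [← ha, mul_assoc, mul_t_add_self hv1, mul_zero]
end

section
/- Let W₁ = (R₁, G₁) and W₂ = (R₂, G₂) be abstract Witt rings, with augmentation ideals I₁ ⊴ R₁ and I₂ ⊴ R₂ (the ideals generated by {a + b : a, b ∈ G₁}, resp. {a + b : a, b ∈ G₂}). Let R be the subring of the direct product R₁ × R₂ generated as an additive group by G = G₁ × G₂, and let I be the ideal of R generated by {g + h : g, h ∈ G}. Then for every i ≥ 1 one has I^i = { (u, v) ∈ R₁ × R₂ : u ∈ I₁^i and v ∈ I₂^i }; in particular I₁^i × I₂^i is contained in R. (Consequently the associated graded Witt ring of the direct product W₁ ⊛ W₂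 is the direct sum of the graded Witt rings of W₁ and W₂.) -/
set_option synthInstance.maxHeartbeats 400000

/-- The augmentation ideal of an abstract Witt ring: the ideal generated by the sums
`a + b` of pairs of elements of the group `G` of square classes. -/
def wittAug (R : Type*) [CommRing R] (G : Set R) : Ideal R :=
  Ideal.span {r | ∃ a ∈ G, ∃ b ∈ G, r = a + b}

/-- `(R, G)` is an abstract Witt ring: `G` is a subgroup of `R^×` of exponent 2
containing `-1` which generates `R` additively, and the augmentation ideal satisfies
(AP1), (AP2) and the Witt chain condition (WC). -/
structure IsAbstractWittRing (R : Type*) [CommRing R] (G : Set R) : Prop where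
  neg_one_mem : (-1 : R) ∈ G
  mul_mem : ∀ a ∈ G, ∀ b ∈ G, a * b ∈ G
  sq_eq_one : ∀ a ∈ G, a * a = 1
  add_gen : AddSubgroup.closure G = ⊤
  ap1 : ∀ a ∈ G, a ∉ wittAug R G
  ap2 : ∀ a ∈ G, ∀ b ∈ G, a + b ∈ (wittAug R G) ^ 2 → a + b = 0
  wc : ∀ n : ℕ, ∀ _hn : 3 ≤ n, ∀ a b : Fin n → R, (∀ i, a i ∈ G) → (∀ i, b i ∈ G) →
    ∑ i, a i = ∑ i, b i →
      ∃ a' ∈ G, ∃ b' ∈ G, ∃ c : ℕ → R, (∀ j, 2 ≤ j → j < n → c j ∈ G) ∧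
        (∑ i ∈ Finset.univ.filter (fun i : Fin n => (i : ℕ) ≠ 0), a i)
            = a' + ∑ j ∈ Finset.Ico 2 n, c j ∧
        a ⟨0, by omega⟩ + a' = b ⟨0, by omega⟩ + b'

/-- The augmentation ideal is contained in the additive subgroup generated by the
two-element sums `a + b`, `a b ∈ G`. -/
lemma wittAug_le_closure {R : Type*} [CommRing R] {G : Set R}
    (hmul : ∀ a ∈ G, ∀ b ∈ G, a * b ∈ G)
    (hgen : AddSubgroup.closure G = ⊤) {x : R} (hx : x ∈ wittAug R G) :
    x ∈ AddSubgroup.closure {r : R | ∃ a ∈ G, ∃ b ∈ G, r = a + b} := by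
  set T : Set R := {r : R | ∃ a ∈ G, ∃ b ∈ G, r = a + b} with hT
  have hQ : ∀ g ∈ G, ∀ y ∈ AddSubgroup.closure T, g * y ∈ AddSubgroup.closure T := by
    intro g hg y hy
    induction hy using AddSubgroup.closure_induction with
    | mem z hz =>
        obtain ⟨a, ha, b, hb, rfl⟩ := hz
        rw [mul_add]
        exact AddSubgroup.subset_closure ⟨g * a, hmul g hg a ha, g * b, hmul g hg b hb, rfl⟩
    | zero => simpa using (AddSubgroup.closure T).zero_mem
    | add u v _ _ hu hv => rw [mul_add]; exact add_mem hu hv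
    | neg u _ hu => rw [mul_neg]; exact neg_mem hu
  have hR : ∀ r : R, ∀ y ∈ AddSubgroup.closure T, r * y ∈ AddSubgroup.closure T := by
    intro r y hy
    have hr : r ∈ AddSubgroup.closure G := by rw [hgen]; trivial
    induction hr using AddSubgroup.closure_induction with
    | mem g hg => exact hQ g hg y hy
    | zero => simpa using (AddSubgroup.closure T).zero_mem
    | add u v _ _ hu hv => rw [add_mul]; exact add_mem hu hv
    | neg u _ hu => rw [neg_mul]; exact neg_mem hu
  induction hx using Submodule.span_induction with
  | mem z hz => exact AddSubgroup.subset_closure hz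
  | zero => exact zero_mem _
  | add u v _ _ hu hv => exact add_mem hu hv
  | smul r u _ hu => simpa [smul_eq_mul] using hR r u hu

/-- Powers of ideals are carried into powers of ideals along ring homomorphisms. -/
lemma pow_le_comap_pow {A B : Type*} [CommRing A] [CommRing B] (f : A →+* B)
    (I : Ideal A) (J : Ideal B) (h : I ≤ Ideal.comap f J) :
    ∀ i : ℕ, I ^ i ≤ Ideal.comap f (J ^ i) := by
  intro i
  induction i with
  | zero => simp [Ideal.one_eq_top]
  | succ n ih =>
      rw [pow_succ, pow_succ]
      refine Ideal.mul_le.mpr fun r hr s hs => ?_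
      have : f (r * s) ∈ J ^ n * J := by
        rw [map_mul]; exact Ideal.mul_mem_mul (ih hr) (h hs)
      exact this

/-- Let `W₁ = (R₁, G₁)` and `W₂ = (R₂, G₂)` be abstract Witt rings,
let `S` be the subring of `R₁ × R₂` additively generated by `G = G₁ × G₂`, and let `I`
be the ideal of `S` generated by `{g + h : g, h ∈ G}`.  Then for every `i ≥ 1`,
`I^i = {(u, v) : u ∈ I₁^i, v ∈ I₂^i}`; in particular `I₁^i × I₂^i ⊆ S`. -/
theorem stmt16 {R₁ R₂ : Type*} [CommRing R₁] [CommRing R₂]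
    (G₁ : Set R₁) (G₂ : Set R₂)
    (hW₁ : IsAbstractWittRing R₁ G₁) (hW₂ : IsAbstractWittRing R₂ G₂)
    (S : Subring (R₁ × R₂))
    (hS : (S : Set (R₁ × R₂)) = (AddSubgroup.closure (G₁ ×ˢ G₂) : AddSubgroup (R₁ × R₂)))
    (I : Ideal S)
    (hI : I = Ideal.span {r : S | ∃ g ∈ G₁ ×ˢ G₂, ∃ h ∈ G₁ ×ˢ G₂, r.val = g + h}) :
    ∀ i : ℕ, 1 ≤ i →
      (∀ w : S, w ∈ I ^ i ↔
        (w : R₁ × R₂).1 ∈ (wittAug R₁ G₁) ^ i ∧ (w : R₁ × R₂).2 ∈ (wittAug R₂ G₂) ^ i)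
      ∧ ∀ u v, u ∈ (wittAug R₁ G₁) ^ i → v ∈ (wittAug R₂ G₂) ^ i → (u, v) ∈ S := by
  have h1₁ : (1 : R₁) ∈ G₁ := by
    simpa using hW₁.mul_mem _ hW₁.neg_one_mem _ hW₁.neg_one_mem
  have h1₂ : (1 : R₂) ∈ G₂ := by
    simpa using hW₂.mul_mem _ hW₂.neg_one_mem _ hW₂.neg_one_mem
  have memS : ∀ p : R₁ × R₂, p ∈ G₁ ×ˢ G₂ → p ∈ S := by
    intro p hp
    have : p ∈ (S : Set (R₁ × R₂)) := by
      rw [hS]; exact AddSubgroup.subset_closure hp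
    exact this
  -- generators of the form (a + b, 0)
  have genL : ∀ a ∈ G₁, ∀ b ∈ G₁, ∃ w : S, w ∈ I ∧ (w : R₁ × R₂) = (a + b, 0) := by
    intro a ha b hb
    have hval : ((a + b, 0) : R₁ × R₂) = (a, (1 : R₂)) + (b, (-1 : R₂)) := by
      simp [Prod.ext_iff]
    have hmemS : ((a + b, 0) : R₁ × R₂) ∈ S := by
      rw [hval]
      exact add_mem (memS _ ⟨ha, h1₂⟩) (memS _ ⟨hb, hW₂.neg_one_mem⟩)
    refine ⟨⟨_, hmemS⟩, ?_, rfl⟩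
    rw [hI]
    exact Ideal.subset_span ⟨(a, 1), ⟨ha, h1₂⟩, (b, -1), ⟨hb, hW₂.neg_one_mem⟩, hval⟩
  have genR : ∀ c ∈ G₂, ∀ d ∈ G₂, ∃ w : S, w ∈ I ∧ (w : R₁ × R₂) = (0, c + d) := by
    intro c hc d hd
    have hval : ((0, c + d) : R₁ × R₂) = ((1 : R₁), c) + ((-1 : R₁), d) := by
      simp [Prod.ext_iff]
    have hmemS : ((0, c + d) : R₁ × R₂) ∈ S := by
      rw [hval]
      exact add_mem (memS _ ⟨h1₁, hc⟩) (memS _ ⟨hW₁.neg_one_mem, hd⟩)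
    refine ⟨⟨_, hmemS⟩, ?_, rfl⟩
    rw [hI]
    exact Ideal.subset_span ⟨(1, c), ⟨h1₁, hc⟩, (-1, d), ⟨hW₁.neg_one_mem, hd⟩, hval⟩
  -- base-case lifts
  have L1b : ∀ u ∈ wittAug R₁ G₁, ∃ w : S, w ∈ I ∧ (w : R₁ × R₂) = (u, 0) := by
    intro u hu
    have hu' := wittAug_le_closure hW₁.mul_mem hW₁.add_gen hu
    clear hu
    induction hu' using AddSubgroup.closure_induction with
    | mem z hz =>
        obtain ⟨a, ha, b, hb, rfl⟩ := hz
        exact genL a ha b hb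
    | zero => exact ⟨0, zero_mem _, by simp; rfl⟩
    | add x y _ _ hx hy =>
        obtain ⟨w1, hw1, e1⟩ := hx
        obtain ⟨w2, hw2, e2⟩ := hy
        exact ⟨w1 + w2, add_mem hw1 hw2, by
          push_cast
          rw [e1, e2]; simp [Prod.ext_iff]⟩
    | neg x _ hx =>
        obtain ⟨w1, hw1, e1⟩ := hx
        exact ⟨-w1, neg_mem hw1, by push_cast; rw [e1]; simp [Prod.ext_iff]⟩
  have L2b : ∀ v ∈ wittAug R₂ G₂, ∃ w : S, w ∈ I ∧ (w : R₁ × R₂) = (0, v) := by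
    intro v hv
    have hv' := wittAug_le_closure hW₂.mul_mem hW₂.add_gen hv
    clear hv
    induction hv' using AddSubgroup.closure_induction with
    | mem z hz =>
        obtain ⟨c, hc, d, hd, rfl⟩ := hz
        exact genR c hc d hd
    | zero => exact ⟨0, zero_mem _, by simp; rfl⟩
    | add x y _ _ hx hy =>
        obtain ⟨w1, hw1, e1⟩ := hx
        obtain ⟨w2, hw2, e2⟩ := hy
        exact ⟨w1 + w2, add_mem hw1 hw2, by
          push_cast
          rw [e1, e2]; simp [Prod.ext_iff]⟩
    | neg x _ hx =>
        obtain ⟨w1, hw1, e1⟩ := hx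
        exact ⟨-w1, neg_mem hw1, by push_cast; rw [e1]; simp [Prod.ext_iff]⟩
  -- lifts for powers
  have L1 : ∀ j : ℕ, ∀ u ∈ (wittAug R₁ G₁) ^ (j + 1),
      ∃ w : S, w ∈ I ^ (j + 1) ∧ (w : R₁ × R₂) = (u, 0) := by
    intro j
    induction j with
    | zero =>
        intro u hu
        rw [zero_add, pow_one] at hu
        simpa [zero_add, pow_one] using L1b u hu
    | succ n ih =>
        intro u hu
        rw [pow_succ] at hu
        refine Submodule.mul_induction_on hu ?_ ?_
        · intro x hx y hy
          obtain ⟨w1, hw1, e1⟩ := ih x hx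
          obtain ⟨w2, hw2, e2⟩ := L1b y hy
          refine ⟨w1 * w2, ?_, ?_⟩
          · rw [pow_succ]; exact Ideal.mul_mem_mul hw1 hw2
          · push_cast
            rw [e1, e2]; simp [Prod.ext_iff]
        · intro x y hx hy
          obtain ⟨w1, hw1, e1⟩ := hx
          obtain ⟨w2, hw2, e2⟩ := hy
          exact ⟨w1 + w2, add_mem hw1 hw2, by
            push_cast
            rw [e1, e2]; simp [Prod.ext_iff]⟩
  have L2 : ∀ j : ℕ, ∀ v ∈ (wittAug R₂ G₂) ^ (j + 1),
      ∃ w : S, w ∈ I ^ (j + 1) ∧ (w : R₁ × R₂) = (0, v) := by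
    intro j
    induction j with
    | zero =>
        intro v hv
        rw [zero_add, pow_one] at hv
        simpa [zero_add, pow_one] using L2b v hv
    | succ n ih =>
        intro v hv
        rw [pow_succ] at hv
        refine Submodule.mul_induction_on hv ?_ ?_
        · intro x hx y hy
          obtain ⟨w1, hw1, e1⟩ := ih x hx
          obtain ⟨w2, hw2, e2⟩ := L2b y hy
          refine ⟨w1 * w2, ?_, ?_⟩
          · rw [pow_succ]; exact Ideal.mul_mem_mul hw1 hw2
          · push_cast
            rw [e1, e2]; simp [Prod.ext_iff]
        · intro x y hx hy
          obtain ⟨w1, hw1, e1⟩ := hx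
          obtain ⟨w2, hw2, e2⟩ := hy
          exact ⟨w1 + w2, add_mem hw1 hw2, by
            push_cast
            rw [e1, e2]; simp [Prod.ext_iff]⟩
  -- forward direction via the coordinate projections
  set F₁ : S →+* R₁ := (RingHom.fst R₁ R₂).comp S.subtype with hF₁
  set F₂ : S →+* R₂ := (RingHom.snd R₁ R₂).comp S.subtype with hF₂
  have hc₁ : I ≤ Ideal.comap F₁ (wittAug R₁ G₁) := by
    rw [hI]
    refine Ideal.span_le.mpr ?_
    rintro r ⟨g, ⟨hg1, _⟩, h, ⟨hh1, _⟩, hr⟩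
    show F₁ r ∈ wittAug R₁ G₁
    have : F₁ r = g.1 + h.1 := by
      show (r : R₁ × R₂).1 = g.1 + h.1
      rw [hr]; rfl
    rw [this]
    exact Ideal.subset_span ⟨g.1, hg1, h.1, hh1, rfl⟩
  have hc₂ : I ≤ Ideal.comap F₂ (wittAug R₂ G₂) := by
    rw [hI]
    refine Ideal.span_le.mpr ?_
    rintro r ⟨g, ⟨_, hg2⟩, h, ⟨_, hh2⟩, hr⟩
    show F₂ r ∈ wittAug R₂ G₂
    have : F₂ r = g.2 + h.2 := by
      show (r : R₁ × R₂).2 = g.2 + h.2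
      rw [hr]; rfl
    rw [this]
    exact Ideal.subset_span ⟨g.2, hg2, h.2, hh2, rfl⟩
  intro i hi
  obtain ⟨j, rfl⟩ : ∃ j, i = j + 1 := ⟨i - 1, by omega⟩
  constructor
  · intro w
    constructor
    · intro hw
      exact ⟨pow_le_comap_pow F₁ I _ hc₁ (j + 1) hw,
        pow_le_comap_pow F₂ I _ hc₂ (j + 1) hw⟩
    · rintro ⟨h1, h2⟩
      obtain ⟨w1, hw1, e1⟩ := L1 j _ h1
      obtain ⟨w2, hw2, e2⟩ := L2 j _ h2
      have hw : w = w1 + w2 := by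
        apply Subtype.ext
        push_cast
        rw [e1, e2]
        simp [Prod.ext_iff]
      rw [hw]
      exact add_mem hw1 hw2
  · intro u v hu hv
    obtain ⟨w1, hw1, e1⟩ := L1 j u hu
    obtain ⟨w2, hw2, e2⟩ := L2 j v hv
    have : ((u, v) : R₁ × R₂) = ((w1 + w2 : S) : R₁ × R₂) := by
      push_cast
      rw [e1, e2]
      simp [Prod.ext_iff]
    rw [this]
    exact (w1 + w2).2
end

section
/- Let W = (R, G) be an abstract Witt ring with augmentation ideal I_W ⊴ R (the ideal generated by {a + b : a, b ∈ G}), and let R[C₂] be the group ring of R over the group C₂ = {1, x} of order 2, so that every element of R[C₂] is uniquely r + s·x with r, s ∈ R. Let I be the ideal of R[C₂] generated by { g·c + h·c' : g, h ∈ G, c, c' ∈ C₂ } (the augmentation ideal of the group ring abstract Witt ring W[x] = (R[C₂], G × C₂)). Then for every i ≥ 1 one has I^i = { u + (1 + x)·v : u ∈ I_W^i, v ∈ I_W^{i−1} }, where I_W^0 = R, and every element of I^i has a unique representation of this form. (Consequently the associated graded Witt ring of W[x] is the twisted extension (gr W)(t | y), where t is the initial form of 1 + 1 and y the initial form of 1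 + x.) -/
set_option synthInstance.maxHeartbeats 400000

/-- The group ring `R[C₂]`, where `C₂ = {1, x}` is the (multiplicative) group of order
two. -/
abbrev GroupRingC2 (R : Type*) [CommRing R] : Type _ :=
  MonoidAlgebra R (Multiplicative (ZMod 2))

/-- The generator `x` of `C₂` inside the group ring `R[C₂]`. -/
noncomputable def xC2 (R : Type*) [CommRing R] : GroupRingC2 R :=
  MonoidAlgebra.of R (Multiplicative (ZMod 2)) (Multiplicative.ofAdd 1)

namespace Stmt17Aux

open Multiplicative

variable {R : Type*} [CommRing R]

noncomputable instance instCoeFunGR : CoeFun (GroupRingC2 R) (fun _ => Multiplicative (ZMod 2) → R) :=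
  ⟨fun w => w.coeff⟩

lemma gcover : ∀ g : Multiplicative (ZMod 2), g = 1 ∨ g = ofAdd 1 := by decide

lemma gne : ¬ (ofAdd (1 : ZMod 2) = 1) := by decide
lemma gne' : ¬ ((1 : Multiplicative (ZMod 2)) = ofAdd 1) := by decide
lemma gmul : (ofAdd (1 : ZMod 2)) * ofAdd 1 = 1 := by decide

lemma addap (f g : GroupRingC2 R) (c : Multiplicative (ZMod 2)) :
    (f + g) c = f c + g c := rfl

lemma zeroap (c : Multiplicative (ZMod 2)) : (0 : GroupRingC2 R) c = 0 := rfl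

lemma singap (c c' : Multiplicative (ZMod 2)) (r : R) :
    (MonoidAlgebra.single c r : GroupRingC2 R) c' = if c = c' then r else 0 := by
  rw [MonoidAlgebra.coeff_single]; exact Finsupp.single_apply

lemma algebraMap_eq (r : R) :
    algebraMap R (GroupRingC2 R) r = MonoidAlgebra.single 1 r := by
  rw [MonoidAlgebra.coe_algebraMap]; simp

lemma decompA (w : GroupRingC2 R) :
    w = MonoidAlgebra.single 1 (w 1) + MonoidAlgebra.single (ofAdd 1) (w (ofAdd 1)) := by
  ext g
  rcases gcover g with h | h <;> subst h <;>
    simp [addap, singap, gne, gne']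

lemma xC2_eq : xC2 R = MonoidAlgebra.single (ofAdd 1) (1:R) := rfl

lemma repr_apply_one (u v : R) :
    (algebraMap R (GroupRingC2 R) u + (1 + xC2 R) * algebraMap R (GroupRingC2 R) v) 1
      = u + v := by
  rw [algebraMap_eq, algebraMap_eq, add_mul, one_mul, xC2_eq,
    MonoidAlgebra.single_mul_single, one_mul]
  simp [addap, singap, gne, gne']

lemma repr_apply_x (u v : R) :
    (algebraMap R (GroupRingC2 R) u + (1 + xC2 R) * algebraMap R (GroupRingC2 R) v) (ofAdd 1)
      = v := by
  rw [algebraMap_eq, algebraMap_eq, add_mul, one_mul, xC2_eq,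
    MonoidAlgebra.single_mul_single, one_mul]
  simp [addap, singap, gne, gne']

lemma mul_apply_one (a b : GroupRingC2 R) :
    (a * b) 1 = a 1 * b 1 + a (ofAdd 1) * b (ofAdd 1) := by
  conv_lhs => rw [decompA a, decompA b]
  rw [add_mul, mul_add, mul_add]
  simp only [MonoidAlgebra.single_mul_single, one_mul, mul_one, gmul]
  simp [addap, singap, gne, gne']

lemma mul_apply_x (a b : GroupRingC2 R) :
    (a * b) (ofAdd 1) = a 1 * b (ofAdd 1) + a (ofAdd 1) * b 1 := by
  conv_lhs => rw [decompA a, decompA b]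
  rw [add_mul, mul_add, mul_add]
  simp only [MonoidAlgebra.single_mul_single, one_mul, mul_one, gmul]
  simp [addap, singap, gne, gne']

/-- The ring hom `R[C₂] → R` sending `x ↦ -1`. -/
noncomputable def sigC2 : GroupRingC2 R →+* R where
  toFun w := w 1 - w (ofAdd 1)
  map_one' := by
    rw [MonoidAlgebra.one_def]
    simp [singap, gne, gne']
  map_mul' a b := by show (a * b) 1 - (a * b) (ofAdd 1) = (a 1 - a (ofAdd 1)) * (b 1 - b (ofAdd 1)); rw [mul_apply_one, mul_apply_x]; ring
  map_zero' := by simp [zeroap]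
  map_add' a b := by simp only [addap]; ring

/-- The ring hom `R[C₂] → R` sending `x ↦ 1`. -/
noncomputable def epsC2 : GroupRingC2 R →+* R where
  toFun w := w 1 + w (ofAdd 1)
  map_one' := by
    rw [MonoidAlgebra.one_def]
    simp [singap, gne, gne']
  map_mul' a b := by show (a * b) 1 + (a * b) (ofAdd 1) = (a 1 + a (ofAdd 1)) * (b 1 + b (ofAdd 1)); rw [mul_apply_one, mul_apply_x]; ring
  map_zero' := by simp [zeroap]
  map_add' a b := by simp only [addap]; ring

lemma sigC2_apply (w : GroupRingC2 R) : sigC2 w = w 1 - w (ofAdd 1) := rfl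
lemma epsC2_apply (w : GroupRingC2 R) : epsC2 w = w 1 + w (ofAdd 1) := rfl

lemma single_apply_one (c : Multiplicative (ZMod 2)) (r : R) :
    (MonoidAlgebra.single c r : GroupRingC2 R) 1 = if c = 1 then r else 0 := by
  rcases gcover c with h | h <;> subst h <;>
    simp [singap, gne, gne']

lemma single_apply_x (c : Multiplicative (ZMod 2)) (r : R) :
    (MonoidAlgebra.single c r : GroupRingC2 R) (ofAdd 1) = if c = 1 then 0 else r := by
  rcases gcover c with h | h <;> subst h <;>
    simp [singap, gne, gne']

lemma repr_decomp (w : GroupRingC2 R) :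
    w = algebraMap R (GroupRingC2 R) (w 1 - w (ofAdd 1))
      + (1 + xC2 R) * algebraMap R (GroupRingC2 R) (w (ofAdd 1)) := by
  ext g
  rcases gcover g with h | h <;> subst h
  · rw [repr_apply_one]; ring
  · rw [repr_apply_x]

end Stmt17Aux

open Multiplicative Stmt17Aux

/-- Let `W = (R, G)` be an abstract Witt ring, `R[C₂]` the group ring
over `C₂ = {1, x}`, and `I` the ideal of `R[C₂]` generated by
`{g·c + h·c' : g, h ∈ G, c, c' ∈ C₂}` (the augmentation ideal of `W[x]`).  Then for every
`i ≥ 1`, `I^i = { u + (1 + x)·v : u ∈ I_W^i, v ∈ I_W^{i−1} }` (with `I_W^0 = R`), and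
this representation of elements of `I^i` is unique. -/
theorem stmt17 {R : Type*} [CommRing R] (G : Set R) (hW : IsAbstractWittRing R G)
    (I : Ideal (GroupRingC2 R))
    (hI : I = Ideal.span {z : GroupRingC2 R | ∃ g ∈ G, ∃ h ∈ G,
      ∃ c c' : Multiplicative (ZMod 2),
        z = MonoidAlgebra.single c g + MonoidAlgebra.single c' h}) :
    ∀ i : ℕ, 1 ≤ i →
      (∀ w : GroupRingC2 R, w ∈ I ^ i ↔
        ∃ u ∈ (wittAug R G) ^ i, ∃ v ∈ (wittAug R G) ^ (i - 1),
          w = algebraMap R (GroupRingC2 R) u + (1 + xC2 R) * algebraMap R (GroupRingC2 R) v)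
      ∧ ∀ u ∈ (wittAug R G) ^ i, ∀ v ∈ (wittAug R G) ^ (i - 1),
          ∀ u' ∈ (wittAug R G) ^ i, ∀ v' ∈ (wittAug R G) ^ (i - 1),
            algebraMap R (GroupRingC2 R) u + (1 + xC2 R) * algebraMap R (GroupRingC2 R) v
              = algebraMap R (GroupRingC2 R) u'
                  + (1 + xC2 R) * algebraMap R (GroupRingC2 R) v' →
            u = u' ∧ v = v' := by
  classical
  set J := wittAug R G with hJ
  -- basic facts about G and J
  have hone : (1 : R) ∈ G := by
    have := hW.mul_mem _ hW.neg_one_mem _ hW.neg_one_mem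
    simpa using this
  have hneg : ∀ a ∈ G, -a ∈ G := by
    intro a ha
    have := hW.mul_mem _ hW.neg_one_mem _ ha
    simpa using this
  have hJmem : ∀ a ∈ G, ∀ b ∈ G, a + b ∈ J := fun a ha b hb =>
    Ideal.subset_span ⟨a, ha, b, hb, rfl⟩
  -- values of sigC2 and epsC2 on singles
  have hsig_single : ∀ (c : Multiplicative (ZMod 2)) (r : R),
      sigC2 (MonoidAlgebra.single c r) = if c = 1 then r else -r := by
    intro c r
    rw [sigC2_apply, single_apply_one, single_apply_x]
    rcases gcover c with h | h <;> subst h <;> simp [gne]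
  have heps_single : ∀ (c : Multiplicative (ZMod 2)) (r : R),
      epsC2 (MonoidAlgebra.single c r) = r := by
    intro c r
    rw [epsC2_apply, single_apply_one, single_apply_x]
    rcases gcover c with h | h <;> subst h <;> simp [gne]
  -- sigC2 maps I into J
  have hsigI : ∀ w ∈ I, sigC2 w ∈ J := by
    intro w hw
    rw [hI] at hw
    have hle : Ideal.span {z : GroupRingC2 R | ∃ g ∈ G, ∃ h ∈ G,
        ∃ c c' : Multiplicative (ZMod 2),
          z = MonoidAlgebra.single c g + MonoidAlgebra.single c' h}
        ≤ Ideal.comap (sigC2 (R := R)) J := by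
      apply Ideal.span_le.mpr
      rintro z ⟨g, hg, h, hh, c, c', rfl⟩
      show sigC2 (MonoidAlgebra.single c g + MonoidAlgebra.single c' h) ∈ J
      rw [map_add, hsig_single, hsig_single]
      split_ifs <;> solve_by_elim
    exact hle hw
  have hepsI : ∀ w ∈ I, epsC2 w ∈ J := by
    intro w hw
    rw [hI] at hw
    have hle : Ideal.span {z : GroupRingC2 R | ∃ g ∈ G, ∃ h ∈ G,
        ∃ c c' : Multiplicative (ZMod 2),
          z = MonoidAlgebra.single c g + MonoidAlgebra.single c' h}
        ≤ Ideal.comap (epsC2 (R := R)) J := by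
      apply Ideal.span_le.mpr
      rintro z ⟨g, hg, h, hh, c, c', rfl⟩
      show epsC2 (MonoidAlgebra.single c g + MonoidAlgebra.single c' h) ∈ J
      rw [map_add, heps_single, heps_single]
      solve_by_elim
    exact hle hw
  -- powers
  have hsig : ∀ k : ℕ, ∀ w ∈ I ^ k, sigC2 w ∈ J ^ k := by
    intro k
    induction k with
    | zero => intro w _; rw [pow_zero, Ideal.one_eq_top]; exact Submodule.mem_top
    | succ n ih =>
      intro w hw
      rw [pow_succ] at hw
      refine Submodule.mul_induction_on hw ?_ ?_
      · intro m hm z hz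
        rw [map_mul, pow_succ]
        exact Ideal.mul_mem_mul (ih m hm) (hsigI z hz)
      · intro x y hx hy
        rw [map_add]
        exact Ideal.add_mem _ hx hy
  have heps : ∀ k : ℕ, ∀ w ∈ I ^ k, epsC2 w ∈ J ^ k := by
    intro k
    induction k with
    | zero => intro w _; rw [pow_zero, Ideal.one_eq_top]; exact Submodule.mem_top
    | succ n ih =>
      intro w hw
      rw [pow_succ] at hw
      refine Submodule.mul_induction_on hw ?_ ?_
      · intro m hm z hz
        rw [map_mul, pow_succ]
        exact Ideal.mul_mem_mul (ih m hm) (hepsI z hz)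
      · intro x y hx hy
        rw [map_add]
        exact Ideal.add_mem _ hx hy
  -- the x-coefficient of an element of I^(k+1) lies in J^k
  have hc1 : ∀ k : ℕ, ∀ w ∈ I ^ (k + 1), w (ofAdd 1) ∈ J ^ k := by
    intro k
    induction k with
    | zero => intro w _; rw [pow_zero, Ideal.one_eq_top]; exact Submodule.mem_top
    | succ n ih =>
      intro w hw
      rw [pow_succ] at hw
      refine Submodule.mul_induction_on hw ?_ ?_
      · intro m hm z hz
        have h1 : (m * z) (ofAdd 1)
            = m (ofAdd 1) * sigC2 z + epsC2 m * z (ofAdd 1) := by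
          rw [mul_apply_x, sigC2_apply, epsC2_apply]; ring
        rw [h1]
        apply Ideal.add_mem
        · rw [pow_succ]
          exact Ideal.mul_mem_mul (ih m hm) (hsigI z hz)
        · exact Ideal.mul_mem_right _ _ (heps (n + 1) m hm)
      · intro x y hx hy
        rw [addap]
        exact Ideal.add_mem _ hx hy
  -- reverse inclusions
  have hmapJ : ∀ k : ℕ, ∀ u ∈ J ^ k, algebraMap R (GroupRingC2 R) u ∈ I ^ k := by
    have h1 : Ideal.map (algebraMap R (GroupRingC2 R)) J ≤ I := by
      rw [Ideal.map_le_iff_le_comap]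
      apply Ideal.span_le.mpr
      rintro z ⟨a, ha, b, hb, rfl⟩
      show algebraMap R (GroupRingC2 R) (a + b) ∈ I
      rw [map_add, hI, algebraMap_eq, algebraMap_eq]
      exact Ideal.subset_span ⟨a, ha, b, hb, 1, 1, rfl⟩
    intro k u hu
    have h2 : algebraMap R (GroupRingC2 R) u
        ∈ Ideal.map (algebraMap R (GroupRingC2 R)) (J ^ k) :=
      Ideal.mem_map_of_mem _ hu
    rw [Ideal.map_pow] at h2
    exact Ideal.pow_right_mono h1 k h2
  have hxI : (1 + xC2 R) ∈ I := by
    rw [hI]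
    refine Ideal.subset_span ⟨1, hone, 1, hone, 1, ofAdd 1, ?_⟩
    rw [MonoidAlgebra.one_def, xC2_eq]
  -- main statement
  intro i hi
  obtain ⟨j, rfl⟩ : ∃ j, i = j + 1 := ⟨i - 1, by omega⟩
  constructor
  · intro w
    constructor
    · intro hw
      refine ⟨sigC2 w, hsig _ w hw, w (ofAdd 1), by simpa using hc1 j w hw, ?_⟩
      rw [sigC2_apply]
      exact repr_decomp w
    · rintro ⟨u, hu, v, hv, rfl⟩
      apply Ideal.add_mem
      · exact hmapJ _ u hu
      · have hv' : algebraMap R (GroupRingC2 R) v ∈ I ^ j :=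
          hmapJ j v (by simpa using hv)
        have h3 := Ideal.mul_mem_mul hxI hv'
        rw [← pow_succ'] at h3
        exact h3
  · intro u hu v hv u' hu' v' hv' heq
    have h1 := congrArg (fun z : GroupRingC2 R => z (ofAdd 1)) heq
    simp only [repr_apply_x] at h1
    have h0 := congrArg (fun z : GroupRingC2 R => z 1) heq
    simp only [repr_apply_one] at h0
    refine ⟨?_, h1⟩
    rw [h1] at h0
    exact add_right_cancel h0
end
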